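/- arXiv:1003.0548 — 7 statements merged into one kernel-verified Lean document; each statement's English description precedes it below -/
import Mathlib

section
/- Let D ⊆ ℝ² be open and connected, l : D → ℝ⁴ a smooth isothermal parametrization of a minimal surface in S³ (⟨l,l⟩ = 1, ⟨l_u,l_u⟩ = ⟨l_v,l_v⟩ = E > 0, ⟨l_u,l_v⟩ = 0, Δl + 2E·l = 0), and n : D → ℝ⁴ a smooth unit normal (⟨n,n⟩ = 1, ⟨n,l⟩ = ⟨n,l_u⟩ = ⟨n,l_v⟩ = 0). Define a = ⟨l_{uu}, n⟩ and b = ⟨l_{uv}, n⟩. Then b_u = a_v and b_v = −a_u on D; in particular a and b are harmonic functions. -/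
open Real
open scoped InnerProductSpace

noncomputable section

/-- ℝ⁴ with the standard Euclidean inner product. -/
abbrev E4 := EuclideanSpace ℝ (Fin 4)

/-- Partial derivative with respect to the first parameter. -/
def pu {F : Type*} [NormedAddCommGroup F] [NormedSpace ℝ F]
    (f : ℝ × ℝ → F) (p : ℝ × ℝ) : F := fderiv ℝ f p (1, 0)

/-- Partial derivative with respect to the second parameter. -/
def pv {F : Type*} [NormedAddCommGroup F] [NormedSpace ℝ F]
    (f : ℝ × ℝ → F) (p : ℝ × ℝ) : F := fderiv ℝ f p (0, 1)

/-!
Differentiating the orthogonality relations of the frame `l, l_u, l_v, n` gives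
`⟨l_u, n_u⟩ = -a`, `⟨l_v, n_u⟩ = ⟨l_u, n_v⟩ = -b` and, by minimality, `⟨l_v, n_v⟩ = a`. As `n_u` and
`n_v` are orthogonal to `l` and `n`, and the frame spans `ℝ⁴`, this yields the Weingarten equations
`E n_u = -(a l_u + b l_v)` and `E n_v = a l_v - b l_u`. In `b_u - a_v` and `b_v + a_u` the
third-order terms cancel, by symmetry of mixed partials and because `l_uu + l_vv = -2E l` is
orthogonal to `n` and `n_u`; the remaining terms vanish by the derivatives of the conformality
relations `⟨l_u, l_v⟩ = 0` and `|l_u|² = |l_v|²`. The Cauchy–Riemann equations then make `a` and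
`b` harmonic.
-/

open Module

theorem eq_zero_of_forall_inner_eq_zero_of_pairwise_orthogonal {V ι : Type*}
    [NormedAddCommGroup V] [InnerProductSpace ℝ V] [FiniteDimensional ℝ V] [Fintype ι]
    {v : ι → V} (hv0 : ∀ i, v i ≠ 0) (hv : Pairwise fun i j => ⟪v i, v j⟫_ℝ = 0)
    (hcard : Fintype.card ι = finrank ℝ V) {x : V} (hx : ∀ i, ⟪v i, x⟫_ℝ = 0) : x = 0 := by
  let b := basisOfLinearIndependentOfCardEqFinrank' v
    (linearIndependent_of_ne_zero_of_inner_eq_zero hv0 hv) hcard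
  exact InnerProductSpace.ext_inner_left_basis b fun i => by simpa [b] using hx i

section PartialDerivatives

variable {G F V : Type*} [NormedAddCommGroup G] [NormedSpace ℝ G]
  [NormedAddCommGroup F] [NormedSpace ℝ F] [NormedAddCommGroup V] [InnerProductSpace ℝ V]
  {D : Set G} {p : G}

theorem ContDiffOn.differentiableAt_of_isOpen {f : G → F} (hf : ContDiffOn ℝ (⊤ : ℕ∞) f D)
    (hD : IsOpen D) (hp : p ∈ D) : DifferentiableAt ℝ f p :=
  (hf.contDiffAt (hD.mem_nhds hp)).differentiableAt (by simp)

theorem ContDiffOn.contDiffAt_two_of_isOpen {f : G → F} (hf : ContDiffOn ℝ (⊤ : ℕ∞) f D)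
    (hD : IsOpen D) (hp : p ∈ D) : ContDiffAt ℝ 2 f p :=
  (hf.contDiffAt (hD.mem_nhds hp)).of_le (WithTop.coe_le_coe.2 le_top)

theorem ContDiffOn.fderiv_apply_of_isOpen {f : G → F} (hf : ContDiffOn ℝ (⊤ : ℕ∞) f D)
    (hD : IsOpen D) (w : G) : ContDiffOn ℝ (⊤ : ℕ∞) (fun q => fderiv ℝ f q w) D :=
  (hf.fderiv_of_isOpen hD (by exact_mod_cast le_top)).clm_apply contDiffOn_const

theorem fderiv_fderiv_apply_comm {f : G → F} (hf : ContDiffAt ℝ 2 f p) (v w : G) :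
    fderiv ℝ (fun q => fderiv ℝ f q v) p w = fderiv ℝ (fun q => fderiv ℝ f q w) p v := by
  have hdf : DifferentiableAt ℝ (fderiv ℝ f) p :=
    (hf.fderiv_right (m := 1) le_rfl).differentiableAt one_ne_zero
  have hsnd : ∀ v w, fderiv ℝ (fun q => fderiv ℝ f q v) p w = fderiv ℝ (fderiv ℝ f) p w v :=
    fun v w => by simp [fderiv_clm_apply hdf (differentiableAt_const v)]
  rw [hsnd, hsnd, hf.isSymmSndFDerivAt (by simp [minSmoothness_of_isRCLikeNormedField]) w v]

theorem inner_fderiv_add_inner_fderiv_of_eqOn {f g : G → V} {c : G → ℝ} (hD : IsOpen D)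
    (hp : p ∈ D) (hf : DifferentiableAt ℝ f p) (hg : DifferentiableAt ℝ g p)
    (h : ∀ q ∈ D, ⟪f q, g q⟫_ℝ = c q) (w : G) :
    ⟪f p, fderiv ℝ g p w⟫_ℝ + ⟪fderiv ℝ f p w, g p⟫_ℝ = fderiv ℝ c p w := by
  rw [← fderiv_inner_apply (𝕜 := ℝ) hf hg,
    (Filter.eventuallyEq_of_mem (hD.mem_nhds hp) h).fderiv_eq]

end PartialDerivatives

section PlaneCoordinates

variable {F V : Type*} [NormedAddCommGroup F] [NormedSpace ℝ F] [NormedAddCommGroup V]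
  [InnerProductSpace ℝ V] {D : Set (ℝ × ℝ)} {p : ℝ × ℝ}

theorem ContDiffOn.pu {f : ℝ × ℝ → F} (hf : ContDiffOn ℝ (⊤ : ℕ∞) f D) (hD : IsOpen D) :
    ContDiffOn ℝ (⊤ : ℕ∞) (pu f) D :=
  hf.fderiv_apply_of_isOpen hD (1, 0)

theorem ContDiffOn.pv {f : ℝ × ℝ → F} (hf : ContDiffOn ℝ (⊤ : ℕ∞) f D) (hD : IsOpen D) :
    ContDiffOn ℝ (⊤ : ℕ∞) (pv f) D :=
  hf.fderiv_apply_of_isOpen hD (0, 1)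

theorem pu_pv_comm {f : ℝ × ℝ → F} (hf : ContDiffAt ℝ 2 f p) : pu (pv f) p = pv (pu f) p :=
  fderiv_fderiv_apply_comm hf (0, 1) (1, 0)

theorem pu_congr {f g : ℝ × ℝ → F} (hD : IsOpen D) (hp : p ∈ D) (h : ∀ q ∈ D, f q = g q) :
    pu f p = pu g p := by
  rw [pu, (Filter.eventuallyEq_of_mem (hD.mem_nhds hp) h).fderiv_eq, pu]

theorem pv_congr {f g : ℝ × ℝ → F} (hD : IsOpen D) (hp : p ∈ D) (h : ∀ q ∈ D, f q = g q) :
    pv f p = pv g p := by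
  rw [pv, (Filter.eventuallyEq_of_mem (hD.mem_nhds hp) h).fderiv_eq, pv]

theorem pu_inner {f g : ℝ × ℝ → V}
    (hf : DifferentiableAt ℝ f p) (hg : DifferentiableAt ℝ g p) :
    pu (fun q => ⟪f q, g q⟫_ℝ) p = ⟪f p, pu g p⟫_ℝ + ⟪pu f p, g p⟫_ℝ :=
  fderiv_inner_apply (𝕜 := ℝ) hf hg (1, 0)

theorem pv_inner {f g : ℝ × ℝ → V}
    (hf : DifferentiableAt ℝ f p) (hg : DifferentiableAt ℝ g p) :
    pv (fun q => ⟪f q, g q⟫_ℝ) p = ⟪f p, pv g p⟫_ℝ + ⟪pv f p, g p⟫_ℝ :=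
  fderiv_inner_apply (𝕜 := ℝ) hf hg (0, 1)

theorem inner_pu_add_inner_pu_eq_zero {f g : ℝ × ℝ → V} {c : ℝ} (hD : IsOpen D) (hp : p ∈ D)
    (hf : DifferentiableAt ℝ f p) (hg : DifferentiableAt ℝ g p) (h : ∀ q ∈ D, ⟪f q, g q⟫_ℝ = c) :
    ⟪f p, pu g p⟫_ℝ + ⟪pu f p, g p⟫_ℝ = 0 := by
  simpa [pu] using inner_fderiv_add_inner_fderiv_of_eqOn (c := fun _ => c) hD hp hf hg h (1, 0)

theorem inner_pv_add_inner_pv_eq_zero {f g : ℝ × ℝ → V} {c : ℝ} (hD : IsOpen D) (hp : p ∈ D)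
    (hf : DifferentiableAt ℝ f p) (hg : DifferentiableAt ℝ g p) (h : ∀ q ∈ D, ⟪f q, g q⟫_ℝ = c) :
    ⟪f p, pv g p⟫_ℝ + ⟪pv f p, g p⟫_ℝ = 0 := by
  simpa [pv] using inner_fderiv_add_inner_fderiv_of_eqOn (c := fun _ => c) hD hp hf hg h (0, 1)

theorem laplacian_eq_zero_of_cauchyRiemann {f g : ℝ × ℝ → F} (hD : IsOpen D) (hp : p ∈ D)
    (hf : ContDiffAt ℝ 2 f p) (hg : ContDiffAt ℝ 2 g p)
    (hu : ∀ q ∈ D, pu f q = pv g q) (hv : ∀ q ∈ D, pv f q = -pu g q) :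
    pu (pu f) p + pv (pv f) p = 0 ∧ pu (pu g) p + pv (pv g) p = 0 := by
  have hfuu : pu (pu f) p = pu (pv g) p := pu_congr hD hp hu
  have hfvv : pv (pv f) p = -pv (pu g) p := by
    rw [pv_congr hD hp hv, pv, fderiv_fun_neg]
    rfl
  have hguu : pu (pu g) p = -pu (pv f) p := by
    rw [pu_congr hD hp fun q hq => (neg_eq_iff_eq_neg.mpr (hv q hq)).symm, pu, fderiv_fun_neg]
    rfl
  have hgvv : pv (pv g) p = pv (pu f) p := pv_congr hD hp fun q hq => (hu q hq).symm
  rw [hfuu, hfvv, hguu, hgvv, pu_pv_comm hf, pu_pv_comm hg]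
  constructor <;> abel

end PlaneCoordinates

section Surface

variable {V : Type*} [NormedAddCommGroup V] [InnerProductSpace ℝ V]

/-- `l` is a minimal isothermal immersion into the unit sphere with conformal factor `E`, and `n`
is a unit normal field along `l` tangent to the sphere. -/
structure IsIsothermalMinimal (D : Set (ℝ × ℝ)) (E : ℝ × ℝ → ℝ) (l n : ℝ × ℝ → V) : Prop where
  isOpen : IsOpen D
  contDiffOn_l : ContDiffOn ℝ (⊤ : ℕ∞) l D
  contDiffOn_n : ContDiffOn ℝ (⊤ : ℕ∞) n D
  pos : ∀ p ∈ D, 0 < E p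
  inner_l_l : ∀ p ∈ D, ⟪l p, l p⟫_ℝ = 1
  inner_lu_lu : ∀ p ∈ D, ⟪pu l p, pu l p⟫_ℝ = E p
  inner_lv_lv : ∀ p ∈ D, ⟪pv l p, pv l p⟫_ℝ = E p
  inner_lu_lv : ∀ p ∈ D, ⟪pu l p, pv l p⟫_ℝ = 0
  minimal : ∀ p ∈ D, pu (pu l) p + pv (pv l) p + (2 * E p) • l p = 0
  inner_n_n : ∀ p ∈ D, ⟪n p, n p⟫_ℝ = 1
  inner_n_l : ∀ p ∈ D, ⟪n p, l p⟫_ℝ = 0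
  inner_n_lu : ∀ p ∈ D, ⟪n p, pu l p⟫_ℝ = 0
  inner_n_lv : ∀ p ∈ D, ⟪n p, pv l p⟫_ℝ = 0

namespace IsIsothermalMinimal

variable {D : Set (ℝ × ℝ)} {E : ℝ × ℝ → ℝ} {l n : ℝ × ℝ → V} {p : ℝ × ℝ}
  (S : IsIsothermalMinimal D E l n)
include S

theorem contDiffOn_lu : ContDiffOn ℝ (⊤ : ℕ∞) (pu l) D := S.contDiffOn_l.pu S.isOpen

theorem contDiffOn_lv : ContDiffOn ℝ (⊤ : ℕ∞) (pv l) D := S.contDiffOn_l.pv S.isOpen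

theorem contDiffOn_luu : ContDiffOn ℝ (⊤ : ℕ∞) (pu (pu l)) D := S.contDiffOn_lu.pu S.isOpen

theorem contDiffOn_luv : ContDiffOn ℝ (⊤ : ℕ∞) (pv (pu l)) D := S.contDiffOn_lu.pv S.isOpen

theorem contDiffOn_lvv : ContDiffOn ℝ (⊤ : ℕ∞) (pv (pv l)) D := S.contDiffOn_lv.pv S.isOpen

theorem differentiableAt_l (hp : p ∈ D) : DifferentiableAt ℝ l p :=
  S.contDiffOn_l.differentiableAt_of_isOpen S.isOpen hp

theorem differentiableAt_n (hp : p ∈ D) : DifferentiableAt ℝ n p :=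
  S.contDiffOn_n.differentiableAt_of_isOpen S.isOpen hp

theorem differentiableAt_lu (hp : p ∈ D) : DifferentiableAt ℝ (pu l) p :=
  S.contDiffOn_lu.differentiableAt_of_isOpen S.isOpen hp

theorem differentiableAt_lv (hp : p ∈ D) : DifferentiableAt ℝ (pv l) p :=
  S.contDiffOn_lv.differentiableAt_of_isOpen S.isOpen hp

theorem differentiableAt_luu (hp : p ∈ D) : DifferentiableAt ℝ (pu (pu l)) p :=
  S.contDiffOn_luu.differentiableAt_of_isOpen S.isOpen hp

theorem differentiableAt_luv (hp : p ∈ D) : DifferentiableAt ℝ (pv (pu l)) p :=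
  S.contDiffOn_luv.differentiableAt_of_isOpen S.isOpen hp

theorem differentiableAt_lvv (hp : p ∈ D) : DifferentiableAt ℝ (pv (pv l)) p :=
  S.contDiffOn_lvv.differentiableAt_of_isOpen S.isOpen hp

theorem pu_pv_l (hp : p ∈ D) : pu (pv l) p = pv (pu l) p :=
  pu_pv_comm (S.contDiffOn_l.contDiffAt_two_of_isOpen S.isOpen hp)

theorem inner_lu_l (hp : p ∈ D) : ⟪pu l p, l p⟫_ℝ = 0 := by
  have h := inner_pu_add_inner_pu_eq_zero S.isOpen hp (S.differentiableAt_l hp)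
    (S.differentiableAt_l hp) S.inner_l_l
  linarith [real_inner_comm (l p) (pu l p)]

theorem inner_lv_l (hp : p ∈ D) : ⟪pv l p, l p⟫_ℝ = 0 := by
  have h := inner_pv_add_inner_pv_eq_zero S.isOpen hp (S.differentiableAt_l hp)
    (S.differentiableAt_l hp) S.inner_l_l
  linarith [real_inner_comm (l p) (pv l p)]

theorem inner_n_nu (hp : p ∈ D) : ⟪n p, pu n p⟫_ℝ = 0 := by
  have h := inner_pu_add_inner_pu_eq_zero S.isOpen hp (S.differentiableAt_n hp)
    (S.differentiableAt_n hp) S.inner_n_n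
  linarith [real_inner_comm (n p) (pu n p)]

theorem inner_n_nv (hp : p ∈ D) : ⟪n p, pv n p⟫_ℝ = 0 := by
  have h := inner_pv_add_inner_pv_eq_zero S.isOpen hp (S.differentiableAt_n hp)
    (S.differentiableAt_n hp) S.inner_n_n
  linarith [real_inner_comm (n p) (pv n p)]

theorem inner_l_nu (hp : p ∈ D) : ⟪l p, pu n p⟫_ℝ = 0 := by
  have h := inner_pu_add_inner_pu_eq_zero S.isOpen hp (S.differentiableAt_n hp)
    (S.differentiableAt_l hp) S.inner_n_l
  linarith [S.inner_n_lu p hp, real_inner_comm (l p) (pu n p)]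

theorem inner_l_nv (hp : p ∈ D) : ⟪l p, pv n p⟫_ℝ = 0 := by
  have h := inner_pv_add_inner_pv_eq_zero S.isOpen hp (S.differentiableAt_n hp)
    (S.differentiableAt_l hp) S.inner_n_l
  linarith [S.inner_n_lv p hp, real_inner_comm (l p) (pv n p)]

theorem inner_lu_nu (hp : p ∈ D) : ⟪pu l p, pu n p⟫_ℝ = -⟪pu (pu l) p, n p⟫_ℝ := by
  have h := inner_pu_add_inner_pu_eq_zero S.isOpen hp (S.differentiableAt_n hp)
    (S.differentiableAt_lu hp) S.inner_n_lu
  linarith [real_inner_comm (pu l p) (pu n p), real_inner_comm (n p) (pu (pu l) p)]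

theorem inner_lu_nv (hp : p ∈ D) : ⟪pu l p, pv n p⟫_ℝ = -⟪pv (pu l) p, n p⟫_ℝ := by
  have h := inner_pv_add_inner_pv_eq_zero S.isOpen hp (S.differentiableAt_n hp)
    (S.differentiableAt_lu hp) S.inner_n_lu
  linarith [real_inner_comm (pu l p) (pv n p), real_inner_comm (n p) (pv (pu l) p)]

theorem inner_lv_nu (hp : p ∈ D) : ⟪pv l p, pu n p⟫_ℝ = -⟪pv (pu l) p, n p⟫_ℝ := by
  have h := inner_pu_add_inner_pu_eq_zero S.isOpen hp (S.differentiableAt_n hp)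
    (S.differentiableAt_lv hp) S.inner_n_lv
  rw [S.pu_pv_l hp] at h
  linarith [real_inner_comm (pv l p) (pu n p), real_inner_comm (n p) (pv (pu l) p)]

theorem inner_lv_nv (hp : p ∈ D) : ⟪pv l p, pv n p⟫_ℝ = ⟪pu (pu l) p, n p⟫_ℝ := by
  have h := inner_pv_add_inner_pv_eq_zero S.isOpen hp (S.differentiableAt_n hp)
    (S.differentiableAt_lv hp) S.inner_n_lv
  have hmin : ⟪n p, pu (pu l) p + pv (pv l) p + (2 * E p) • l p⟫_ℝ = 0 := by
    rw [S.minimal p hp, inner_zero_right]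
  rw [inner_add_right, inner_add_right, real_inner_smul_right, S.inner_n_l p hp] at hmin
  linarith [real_inner_comm (pv l p) (pv n p), real_inner_comm (n p) (pu (pu l) p)]

theorem smul_eq_of_inner_eq_zero (hV : finrank ℝ V = 4) (hp : p ∈ D) {y : V}
    (hyl : ⟪l p, y⟫_ℝ = 0) (hyn : ⟪n p, y⟫_ℝ = 0) :
    E p • y = ⟪pu l p, y⟫_ℝ • pu l p + ⟪pv l p, y⟫_ℝ • pv l p := by
  have : FiniteDimensional ℝ V := .of_finrank_pos (by omega)
  have hE := (S.pos p hp).ne'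
  have hll := S.inner_l_l p hp
  have huu := S.inner_lu_lu p hp
  have hvv := S.inner_lv_lv p hp
  have huv := S.inner_lu_lv p hp
  have hnn := S.inner_n_n p hp
  have hnl := S.inner_n_l p hp
  have hnu := S.inner_n_lu p hp
  have hnv := S.inner_n_lv p hp
  have hul := S.inner_lu_l hp
  have hvl := S.inner_lv_l hp
  rw [← sub_eq_zero]
  refine eq_zero_of_forall_inner_eq_zero_of_pairwise_orthogonal
    (v := ![l p, pu l p, pv l p, n p]) ?_ ?_ (by simp [hV]) ?_
  · intro i
    fin_cases i <;> intro h <;> simp_all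
  · intro i j hij
    fin_cases i <;> fin_cases j <;> simp_all [real_inner_comm]
  · intro i
    fin_cases i <;>
      simp_all [inner_sub_right, inner_add_right, real_inner_smul_right, real_inner_comm, mul_comm]

theorem smul_pu_n (hV : finrank ℝ V = 4) (hp : p ∈ D) :
    E p • pu n p = -(⟪pu (pu l) p, n p⟫_ℝ • pu l p + ⟪pv (pu l) p, n p⟫_ℝ • pv l p) := by
  rw [S.smul_eq_of_inner_eq_zero hV hp (S.inner_l_nu hp) (S.inner_n_nu hp), S.inner_lu_nu hp,
    S.inner_lv_nu hp, neg_smul, neg_smul, neg_add]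

theorem smul_pv_n (hV : finrank ℝ V = 4) (hp : p ∈ D) :
    E p • pv n p = ⟪pu (pu l) p, n p⟫_ℝ • pv l p - ⟪pv (pu l) p, n p⟫_ℝ • pu l p := by
  rw [S.smul_eq_of_inner_eq_zero hV hp (S.inner_l_nv hp) (S.inner_n_nv hp), S.inner_lu_nv hp,
    S.inner_lv_nv hp, neg_smul]
  abel

theorem inner_luv_lu_add_inner_luu_lv (hp : p ∈ D) :
    ⟪pv (pu l) p, pu l p⟫_ℝ + ⟪pu (pu l) p, pv l p⟫_ℝ = 0 := by
  have h := inner_pu_add_inner_pu_eq_zero S.isOpen hp (S.differentiableAt_lu hp)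
    (S.differentiableAt_lv hp) S.inner_lu_lv
  rw [S.pu_pv_l hp] at h
  linarith [real_inner_comm (pu l p) (pv (pu l) p)]

theorem inner_luu_lu_eq_inner_luv_lv (hp : p ∈ D) :
    ⟪pu (pu l) p, pu l p⟫_ℝ = ⟪pv (pu l) p, pv l p⟫_ℝ := by
  have hu : ⟪pu l p, pu (pu l) p⟫_ℝ + ⟪pu (pu l) p, pu l p⟫_ℝ = pu E p :=
    inner_fderiv_add_inner_fderiv_of_eqOn S.isOpen hp (S.differentiableAt_lu hp)
      (S.differentiableAt_lu hp) S.inner_lu_lu (1, 0)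
  have hv : ⟪pv l p, pu (pv l) p⟫_ℝ + ⟪pu (pv l) p, pv l p⟫_ℝ = pu E p :=
    inner_fderiv_add_inner_fderiv_of_eqOn S.isOpen hp (S.differentiableAt_lv hp)
      (S.differentiableAt_lv hp) S.inner_lv_lv (1, 0)
  rw [S.pu_pv_l hp] at hv
  linarith [real_inner_comm (pu l p) (pu (pu l) p), real_inner_comm (pv l p) (pv (pu l) p)]

theorem inner_luv_nu (hV : finrank ℝ V = 4) (hp : p ∈ D) :
    ⟪pv (pu l) p, pu n p⟫_ℝ = ⟪pu (pu l) p, pv n p⟫_ℝ := by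
  apply mul_left_cancel₀ (S.pos p hp).ne'
  rw [← real_inner_smul_right, ← real_inner_smul_right, S.smul_pu_n hV hp, S.smul_pv_n hV hp]
  simp only [inner_neg_right, inner_add_right, inner_sub_right, real_inner_smul_right]
  linear_combination (-⟪pu (pu l) p, n p⟫_ℝ) * S.inner_luv_lu_add_inner_luu_lv hp
    + ⟪pv (pu l) p, n p⟫_ℝ * S.inner_luu_lu_eq_inner_luv_lv hp

theorem inner_luv_nv_add_inner_luu_nu (hV : finrank ℝ V = 4) (hp : p ∈ D) :
    ⟪pv (pu l) p, pv n p⟫_ℝ + ⟪pu (pu l) p, pu n p⟫_ℝ = 0 := by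
  apply mul_left_cancel₀ (S.pos p hp).ne'
  rw [mul_add, mul_zero, ← real_inner_smul_right, ← real_inner_smul_right, S.smul_pu_n hV hp,
    S.smul_pv_n hV hp]
  simp only [inner_neg_right, inner_add_right, inner_sub_right, real_inner_smul_right]
  linear_combination (-⟪pv (pu l) p, n p⟫_ℝ) * S.inner_luv_lu_add_inner_luu_lv hp
    - ⟪pu (pu l) p, n p⟫_ℝ * S.inner_luu_lu_eq_inner_luv_lv hp

theorem inner_luvv_add_inner_luuu (hp : p ∈ D) :
    ⟪pv (pv (pu l)) p, n p⟫_ℝ + ⟪pu (pu (pu l)) p, n p⟫_ℝ = 0 := by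
  have hH : ∀ q ∈ D, pu (pu l) q + pv (pv l) q = -((2 * E q) • l q) := fun q hq =>
    eq_neg_of_add_eq_zero_left (S.minimal q hq)
  have hHn : ∀ q ∈ D, ⟪pu (pu l) q + pv (pv l) q, n q⟫_ℝ = 0 := fun q hq => by
    rw [hH q hq, inner_neg_left, real_inner_smul_left, real_inner_comm, S.inner_n_l q hq,
      mul_zero, neg_zero]
  have h := inner_pu_add_inner_pu_eq_zero (f := fun q => pu (pu l) q + pv (pv l) q) S.isOpen hp
    ((S.differentiableAt_luu hp).add (S.differentiableAt_lvv hp)) (S.differentiableAt_n hp) hHn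
  have hHu : pu (fun q => pu (pu l) q + pv (pv l) q) p = pu (pu (pu l)) p + pv (pv (pu l)) p := by
    rw [pu, fderiv_fun_add (S.differentiableAt_luu hp) (S.differentiableAt_lvv hp)]
    change pu (pu (pu l)) p + pu (pv (pv l)) p = _
    rw [pu_pv_comm (S.contDiffOn_lv.contDiffAt_two_of_isOpen S.isOpen hp),
      pv_congr S.isOpen hp fun q hq => S.pu_pv_l hq]
  rw [hH p hp, inner_neg_left, real_inner_smul_left, S.inner_l_nu hp, mul_zero, neg_zero,
    zero_add, hHu, inner_add_left] at h
  linarith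

theorem pu_inner_luv_n (hV : finrank ℝ V = 4) (hp : p ∈ D) :
    pu (fun q => ⟪pv (pu l) q, n q⟫_ℝ) p = pv (fun q => ⟪pu (pu l) q, n q⟫_ℝ) p := by
  rw [pu_inner (S.differentiableAt_luv hp) (S.differentiableAt_n hp),
    pv_inner (S.differentiableAt_luu hp) (S.differentiableAt_n hp), S.inner_luv_nu hV hp,
    pu_pv_comm (S.contDiffOn_lu.contDiffAt_two_of_isOpen S.isOpen hp)]

theorem pv_inner_luv_n (hV : finrank ℝ V = 4) (hp : p ∈ D) :
    pv (fun q => ⟪pv (pu l) q, n q⟫_ℝ) p = -pu (fun q => ⟪pu (pu l) q, n q⟫_ℝ) p := by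
  rw [pv_inner (S.differentiableAt_luv hp) (S.differentiableAt_n hp),
    pu_inner (S.differentiableAt_luu hp) (S.differentiableAt_n hp)]
  linarith [S.inner_luv_nv_add_inner_luu_nu hV hp, S.inner_luvv_add_inner_luuu hp]

end IsIsothermalMinimal

end Surface

theorem stmt_1_general (D : Set (ℝ × ℝ)) (hD : IsOpen D)
    (E : ℝ × ℝ → ℝ) (l n : ℝ × ℝ → E4)
    (hEpos : ∀ p ∈ D, 0 < E p)
    (hl : ContDiffOn ℝ (⊤ : ℕ∞) l D) (hn : ContDiffOn ℝ (⊤ : ℕ∞) n D)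
    (hunit : ∀ p ∈ D, ⟪l p, l p⟫_ℝ = 1)
    (hEu : ∀ p ∈ D, ⟪pu l p, pu l p⟫_ℝ = E p)
    (hEv : ∀ p ∈ D, ⟪pv l p, pv l p⟫_ℝ = E p)
    (hF : ∀ p ∈ D, ⟪pu l p, pv l p⟫_ℝ = 0)
    (hmin : ∀ p ∈ D, pu (pu l) p + pv (pv l) p + (2 * E p) • l p = 0)
    (hn1 : ∀ p ∈ D, ⟪n p, n p⟫_ℝ = 1)
    (hnl : ∀ p ∈ D, ⟪n p, l p⟫_ℝ = 0)
    (hnu : ∀ p ∈ D, ⟪n p, pu l p⟫_ℝ = 0)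
    (hnv : ∀ p ∈ D, ⟪n p, pv l p⟫_ℝ = 0)
    (a b : ℝ × ℝ → ℝ)
    (ha : ∀ p, a p = ⟪pu (pu l) p, n p⟫_ℝ)
    (hb : ∀ p, b p = ⟪pv (pu l) p, n p⟫_ℝ) :
    ∀ p ∈ D,
      pu b p = pv a p ∧ pv b p = -(pu a p) ∧
      pu (pu a) p + pv (pv a) p = 0 ∧ pu (pu b) p + pv (pv b) p = 0 := by
  have S : IsIsothermalMinimal D E l n :=
    ⟨hD, hl, hn, hEpos, hunit, hEu, hEv, hF, hmin, hn1, hnl, hnu, hnv⟩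
  have hV : finrank ℝ E4 = 4 := finrank_euclideanSpace_fin
  obtain rfl : a = fun q => ⟪pu (pu l) q, n q⟫_ℝ := funext ha
  obtain rfl : b = fun q => ⟪pv (pu l) q, n q⟫_ℝ := funext hb
  intro p hp
  have hΔ := laplacian_eq_zero_of_cauchyRiemann hD hp
    ((S.contDiffOn_luv.inner ℝ hn).contDiffAt_two_of_isOpen hD hp)
    ((S.contDiffOn_luu.inner ℝ hn).contDiffAt_two_of_isOpen hD hp)
    (fun q hq => S.pu_inner_luv_n hV hq) (fun q hq => S.pv_inner_luv_n hV hq)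
  exact ⟨S.pu_inner_luv_n hV hp, S.pv_inner_luv_n hV hp, hΔ.2, hΔ.1⟩

/-- for a minimal surface in `S³` in isothermal parameters with unit normal `n`,
the coefficients `a = ⟨l_{uu}, n⟩` and `b = ⟨l_{uv}, n⟩` satisfy the Cauchy–Riemann
conditions `b_u = a_v`, `b_v = −a_u`; in particular `a` and `b` are harmonic. -/
theorem stmt_1 (D : Set (ℝ × ℝ)) (hD : IsOpen D) (hDconn : IsConnected D)
    (E : ℝ × ℝ → ℝ) (l n : ℝ × ℝ → E4)
    (hE : ContDiffOn ℝ (⊤ : ℕ∞) E D) (hEpos : ∀ p ∈ D, 0 < E p)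
    (hl : ContDiffOn ℝ (⊤ : ℕ∞) l D) (hn : ContDiffOn ℝ (⊤ : ℕ∞) n D)
    (hunit : ∀ p ∈ D, ⟪l p, l p⟫_ℝ = 1)
    (hEu : ∀ p ∈ D, ⟪pu l p, pu l p⟫_ℝ = E p)
    (hEv : ∀ p ∈ D, ⟪pv l p, pv l p⟫_ℝ = E p)
    (hF : ∀ p ∈ D, ⟪pu l p, pv l p⟫_ℝ = 0)
    (hmin : ∀ p ∈ D, pu (pu l) p + pv (pv l) p + (2 * E p) • l p = 0)
    (hn1 : ∀ p ∈ D, ⟪n p, n p⟫_ℝ = 1)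
    (hnl : ∀ p ∈ D, ⟪n p, l p⟫_ℝ = 0)
    (hnu : ∀ p ∈ D, ⟪n p, pu l p⟫_ℝ = 0)
    (hnv : ∀ p ∈ D, ⟪n p, pv l p⟫_ℝ = 0)
    (a b : ℝ × ℝ → ℝ)
    (ha : ∀ p, a p = ⟪pu (pu l) p, n p⟫_ℝ)
    (hb : ∀ p, b p = ⟪pv (pu l) p, n p⟫_ℝ) :
    ∀ p ∈ D,
      pu b p = pv a p ∧ pv b p = -(pu a p) ∧
      pu (pu a) p + pv (pv a) p = 0 ∧ pu (pu b) p + pv (pv b) p = 0 :=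
  stmt_1_general D hD E l n hEpos hl hn hunit hEu hEv hF hmin hn1 hnl hnu hnv a b ha hb
end
end

section
/- Let λ ∈ ℝ with λ ≠ 1, and let I ⊆ ℝ be a nonempty open interval. Then there is no twice continuously differentiable function z : I → ℝ satisfying simultaneously z''(τ) − (1/2)·z'(τ)² − 4·e^{−z(τ)} = 0 and λ·z''(τ) + 4·sinh z(τ) = 0 for all τ ∈ I. -/
open Real

/-!
Eliminating `z''` between the two equations gives the first integral
`F = λ z'² + 8 sinh z + 8 λ e^{-z} = 0`. Differentiating `F` along a solution and using
`λ z'' = -4 sinh z` and `cosh z - sinh z = e^{-z}` gives `F' = 8 (1 - λ) e^{-z} z'`, so for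
`λ ≠ 1` the function `z'` vanishes identically, hence so does `z''`. But the first equation
forces `z'' = z'²/2 + 4 e^{-z} > 0`.
-/

noncomputable def firstIntegral (lam : ℝ) (z : ℝ → ℝ) (τ : ℝ) : ℝ :=
  lam * deriv z τ ^ 2 + 8 * sinh (z τ) + 8 * lam * exp (-z τ)

section

variable {lam : ℝ} {z : ℝ → ℝ} {τ : ℝ}

lemma firstIntegral_eq_zero
    (h₁ : deriv (deriv z) τ - (1 / 2) * deriv z τ ^ 2 - 4 * exp (-z τ) = 0)
    (h₂ : lam * deriv (deriv z) τ + 4 * sinh (z τ) = 0) :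
    firstIntegral lam z τ = 0 := by
  unfold firstIntegral
  linear_combination (-2 * lam) * h₁ + 2 * h₂

lemma hasDerivAt_firstIntegral (hz : DifferentiableAt ℝ z τ)
    (hz' : DifferentiableAt ℝ (deriv z) τ)
    (h₂ : lam * deriv (deriv z) τ + 4 * sinh (z τ) = 0) :
    HasDerivAt (firstIntegral lam z) (8 * (1 - lam) * exp (-z τ) * deriv z τ) τ := by
  have hF : HasDerivAt (firstIntegral lam z)
      (lam * (2 * deriv z τ ^ 1 * deriv (deriv z) τ) + 8 * (cosh (z τ) * deriv z τ)
        + 8 * lam * (exp (-z τ) * -deriv z τ)) τ :=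
    ((hz'.hasDerivAt.pow 2).const_mul lam |>.add (hz.hasDerivAt.sinh.const_mul 8)).add
      (hz.hasDerivAt.neg.exp.const_mul (8 * lam))
  convert hF using 1
  linear_combination (-2 * deriv z τ) * h₂ - 8 * deriv z τ * cosh_sub_sinh (z τ)

end

lemma deriv_eq_zero_of_ode {lam : ℝ} (hlam : lam ≠ 1) {s : Set ℝ} (hs : IsOpen s)
    {z : ℝ → ℝ} (hz : ContDiffOn ℝ 2 z s)
    (hode : ∀ τ ∈ s,
      deriv (deriv z) τ - (1 / 2) * deriv z τ ^ 2 - 4 * exp (-z τ) = 0 ∧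
      lam * deriv (deriv z) τ + 4 * sinh (z τ) = 0) :
    ∀ τ ∈ s, deriv z τ = 0 := by
  intro τ hτ
  have hnhds : s ∈ nhds τ := hs.mem_nhds hτ
  have hz₁ : DifferentiableAt ℝ z τ := (hz.contDiffAt hnhds).differentiableAt (by norm_num)
  have hz₂ : DifferentiableAt ℝ (deriv z) τ :=
    ((hz.deriv_of_isOpen hs (m := 1) (by norm_num)).contDiffAt hnhds).differentiableAt
      (by norm_num)
  have hF : firstIntegral lam z =ᶠ[nhds τ] fun _ => 0 :=
    Filter.eventuallyEq_of_mem hnhds fun t ht => firstIntegral_eq_zero (hode t ht).1 (hode t ht).2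
  have hF' : 8 * (1 - lam) * exp (-z τ) * deriv z τ = 0 := by
    rw [← (hasDerivAt_firstIntegral hz₁ hz₂ (hode τ hτ).2).deriv, hF.deriv_eq, deriv_const]
  have hlam' : 1 - lam ≠ 0 := sub_ne_zero.mpr hlam.symm
  simpa [hlam', (exp_pos _).ne'] using hF'

/-- for `λ ≠ 1` there is no twice continuously differentiable function on a
nonempty open interval satisfying simultaneously `z'' − (1/2)z'² − 4e^{−z} = 0` and
`λ·z'' + 4·sinh z = 0`. -/
theorem stmt_8 (lam : ℝ) (hlam : lam ≠ 1) (I : Set ℝ) (a b : ℝ) (hab : a < b)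
    (hI : I = Set.Ioo a b) :
    ¬ ∃ z : ℝ → ℝ, ContDiffOn ℝ 2 z I ∧
      ∀ τ ∈ I,
        deriv (deriv z) τ - (1 / 2) * (deriv z τ) ^ 2 - 4 * Real.exp (-z τ) = 0 ∧
        lam * deriv (deriv z) τ + 4 * Real.sinh (z τ) = 0 := by
  rintro ⟨z, hz, hode⟩
  subst hI
  obtain ⟨τ, hτ⟩ : (Set.Ioo a b).Nonempty := Set.nonempty_Ioo.mpr hab
  have hz' := deriv_eq_zero_of_ode hlam isOpen_Ioo hz hode
  have hz'' : deriv (deriv z) τ = 0 := by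
    rw [(Filter.eventuallyEq_of_mem (isOpen_Ioo.mem_nhds hτ) hz').deriv_eq, deriv_const]
  have h₁ := (hode τ hτ).1
  rw [hz'', hz' τ hτ] at h₁
  linarith [exp_pos (-z τ)]
end

section
/- Let E : ℝ → ℝ be smooth and positive and let l, n : ℝ² → ℝ⁴ be smooth maps (E viewed as a function of u only) with ⟨l,l⟩ = 1, ⟨l_u,l_u⟩ = ⟨l_v,l_v⟩ = E(u), ⟨l_u,l_v⟩ = 0, ⟨n,n⟩ = 1, ⟨n,l⟩ = ⟨n,l_u⟩ = ⟨n,l_v⟩ = 0, satisfying the derivative formulas of a generalized torus of first type: l_{uu} = (E'/2E)·l_u − E·l, l_{uv} = (E'/2E)·l_v + n, l_{vv} = −(E'/2E)·l_u − E·l, n_u = −(1/E)·l_v, n_v = −(1/E)·l_u. Then for every v₀ ∈ ℝ the image of the curve u ↦ l(u, v₀) is contained in the intersection of S³ with a 2-dimensional linear subspace of ℝ⁴, i.e. each u-parameter line is a great circle. -/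
/-!
Fix `v₀` and write `c u = l (u, v₀)`. The formula for `l_uu` says `c'' = (E'/2E) c' - E c`.
If `x` is orthogonal to `c 0` and `c' 0`, then `g = ⟪x, c⟫` solves the same scalar equation with
zero initial data. For this equation the energy `g'² / E + g²` is conserved, so `g` vanishes
identically. Hence `c` stays in the plane spanned by `c 0` and `c' 0`. That plane is
2-dimensional because `‖c‖ = 1` forces `c' ⊥ c`, and `‖c' 0‖² = E 0 > 0`.
-/

open Real
open scoped InnerProductSpace

noncomputable section

theorem hasDerivAt_pu_slice {F : Type*} [NormedAddCommGroup F] [NormedSpace ℝ F]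
    {f : ℝ × ℝ → F} {u v : ℝ} (hf : DifferentiableAt ℝ f (u, v)) :
    HasDerivAt (fun t => f (t, v)) (pu f (u, v)) u :=
  hf.hasFDerivAt.comp_hasDerivAt u ((hasDerivAt_id u).prodMk (hasDerivAt_const u v))

section InnerProductSpace

variable {V : Type*} [NormedAddCommGroup V] [InnerProductSpace ℝ V]

theorem inner_eq_zero_of_hasDerivAt_of_inner_self_eq_one {c c' : ℝ → V}
    (hc : ∀ t, HasDerivAt c (c' t) t) (hunit : ∀ t, ⟪c t, c t⟫_ℝ = 1) (t : ℝ) :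
    ⟪c t, c' t⟫_ℝ = 0 := by
  have hderiv : HasDerivAt (fun s => ⟪c s, c s⟫_ℝ) (2 * ⟪c t, c' t⟫_ℝ) t := by
    simpa only [real_inner_comm (c' t), two_mul] using (hc t).inner ℝ (hc t)
  have hconst : HasDerivAt (fun s => ⟪c s, c s⟫_ℝ) 0 t := by
    simpa only [hunit] using hasDerivAt_const t (1 : ℝ)
  linarith [hderiv.unique hconst]

theorem finrank_span_pair_of_inner_eq_zero {x y : V} (hx : x ≠ 0) (hy : y ≠ 0)
    (hxy : ⟪x, y⟫_ℝ = 0) : Module.finrank ℝ (Submodule.span ℝ {x, y}) = 2 := by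
  have hli : LinearIndependent ℝ ![x, y] := by
    refine linearIndependent_of_ne_zero_of_inner_eq_zero (by simp [Fin.forall_fin_two, hx, hy]) ?_
    intro i j hij
    fin_cases i <;> fin_cases j <;> simp_all [real_inner_comm x y]
  rw [← Matrix.range_cons_cons_empty x y, finrank_span_eq_card hli, Fintype.card_fin]

end InnerProductSpace

section TorusEquation

variable {E g g' : ℝ → ℝ}

theorem hasDerivAt_energy_eq_zero (hE : Differentiable ℝ E) (hEne : ∀ t, E t ≠ 0)
    (hg : ∀ t, HasDerivAt g (g' t) t)
    (hg' : ∀ t, HasDerivAt g' (deriv E t / (2 * E t) * g' t - E t * g t) t) (t : ℝ) :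
    HasDerivAt (fun s => g' s ^ 2 / E s + g s ^ 2) 0 t := by
  refine ((((hg' t).pow 2).div (hE t).hasDerivAt (hEne t)).add ((hg t).pow 2)).congr_deriv ?_
  have := hEne t
  simp only [Pi.pow_apply]
  field_simp
  ring

theorem eq_zero_of_hasDerivAt_of_eq_zero (hE : Differentiable ℝ E) (hEpos : ∀ t, 0 < E t)
    (hg : ∀ t, HasDerivAt g (g' t) t)
    (hg' : ∀ t, HasDerivAt g' (deriv E t / (2 * E t) * g' t - E t * g t) t)
    {t₀ : ℝ} (h₀ : g t₀ = 0) (h₀' : g' t₀ = 0) (t : ℝ) : g t = 0 := by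
  have henergy := hasDerivAt_energy_eq_zero hE (fun s => (hEpos s).ne') hg hg'
  have hconst : g' t ^ 2 / E t + g t ^ 2 = g' t₀ ^ 2 / E t₀ + g t₀ ^ 2 :=
    is_const_of_deriv_eq_zero (fun s => (henergy s).differentiableAt)
      (fun s => (henergy s).deriv) t t₀
  rw [h₀, h₀', zero_pow two_ne_zero, zero_div, add_zero] at hconst
  have : 0 ≤ g' t ^ 2 / E t := div_nonneg (sq_nonneg _) (hEpos t).le
  exact pow_eq_zero_iff two_ne_zero |>.mp (by linarith [sq_nonneg (g t)])

variable {V : Type*} [NormedAddCommGroup V] [InnerProductSpace ℝ V] {c c' : ℝ → V}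

theorem mem_span_of_hasDerivAt (hE : Differentiable ℝ E) (hEpos : ∀ t, 0 < E t)
    (hc : ∀ t, HasDerivAt c (c' t) t)
    (hc' : ∀ t, HasDerivAt c' ((deriv E t / (2 * E t)) • c' t - E t • c t) t) (t₀ t : ℝ) :
    c t ∈ Submodule.span ℝ {c t₀, c' t₀} := by
  set W := Submodule.span ℝ {c t₀, c' t₀}
  have : FiniteDimensional ℝ W := FiniteDimensional.span_of_finite ℝ (Set.toFinite _)
  rw [← W.orthogonal_orthogonal, Submodule.mem_orthogonal]
  intro x hx
  refine eq_zero_of_hasDerivAt_of_eq_zero (g := fun s => ⟪x, c s⟫_ℝ)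
    (g' := fun s => ⟪x, c' s⟫_ℝ) (t₀ := t₀) hE hEpos (fun s => ?_) (fun s => ?_) ?_ ?_ t
  · simpa using (hasDerivAt_const s x).inner ℝ (hc s)
  · simpa [inner_sub_right, inner_smul_right] using (hasDerivAt_const s x).inner ℝ (hc' s)
  · exact (Submodule.mem_orthogonal' W x).mp hx _ (Submodule.subset_span (by simp))
  · exact (Submodule.mem_orthogonal' W x).mp hx _ (Submodule.subset_span (by simp))

end TorusEquation

theorem stmt_9_general (E : ℝ → ℝ) (l : ℝ × ℝ → E4)
    (hE : ContDiff ℝ (⊤ : ℕ∞) E) (hEpos : ∀ u, 0 < E u)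
    (hl : ContDiff ℝ (⊤ : ℕ∞) l)
    (hunit : ∀ p, ⟪l p, l p⟫_ℝ = 1)
    (hEu : ∀ p : ℝ × ℝ, ⟪pu l p, pu l p⟫_ℝ = E p.1)
    (huu : ∀ p : ℝ × ℝ, pu (pu l) p =
      (deriv E p.1 / (2 * E p.1)) • pu l p - E p.1 • l p) :
    ∀ v₀ : ℝ, ∃ W : Submodule ℝ E4, Module.finrank ℝ W = 2 ∧
      ∀ u : ℝ, l (u, v₀) ∈ W ∧ ‖l (u, v₀)‖ = 1 := by
  intro v₀
  have hpul : Differentiable ℝ (pu l) :=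
    ((hl.fderiv_right (m := (⊤ : ℕ∞)) (by norm_cast)).clm_apply contDiff_const).differentiable
      (by simp)
  have hc (u : ℝ) : HasDerivAt (fun t => l (t, v₀)) (pu l (u, v₀)) u :=
    hasDerivAt_pu_slice (hl.differentiable (by simp) _)
  have hc' (u : ℝ) : HasDerivAt (fun t => pu l (t, v₀)) (pu (pu l) (u, v₀)) u :=
    hasDerivAt_pu_slice (hpul _)
  have hl0 : l (0, v₀) ≠ 0 := fun h => by simpa [h] using hunit (0, v₀)
  have hlu0 : pu l (0, v₀) ≠ 0 := fun h => (hEpos 0).ne (by simpa [h] using hEu (0, v₀))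
  refine ⟨Submodule.span ℝ {l (0, v₀), pu l (0, v₀)}, finrank_span_pair_of_inner_eq_zero hl0 hlu0
    (inner_eq_zero_of_hasDerivAt_of_inner_self_eq_one hc (fun t => hunit _) 0), fun u => ⟨?_, ?_⟩⟩
  · exact mem_span_of_hasDerivAt (hE.differentiable (by simp)) hEpos hc
      (fun t => by simpa only [huu] using hc' t) 0 u
  · have h := hunit (u, v₀)
    rwa [real_inner_self_eq_norm_sq, pow_eq_one_iff_of_nonneg (norm_nonneg _) two_ne_zero] at h

/-- for a generalized torus of first type (derivative formulas with `E = E(u)`),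
every `u`-parameter line is a great circle: its image lies in the intersection of `S³` with
a 2-dimensional linear subspace of `ℝ⁴`. -/
theorem stmt_9 (E : ℝ → ℝ) (l n : ℝ × ℝ → E4)
    (hE : ContDiff ℝ (⊤ : ℕ∞) E) (hEpos : ∀ u, 0 < E u)
    (hl : ContDiff ℝ (⊤ : ℕ∞) l) (hn : ContDiff ℝ (⊤ : ℕ∞) n)
    (hunit : ∀ p, ⟪l p, l p⟫_ℝ = 1)
    (hEu : ∀ p : ℝ × ℝ, ⟪pu l p, pu l p⟫_ℝ = E p.1)
    (hEv : ∀ p : ℝ × ℝ, ⟪pv l p, pv l p⟫_ℝ = E p.1)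
    (hF : ∀ p, ⟪pu l p, pv l p⟫_ℝ = 0)
    (hn1 : ∀ p, ⟪n p, n p⟫_ℝ = 1)
    (hnl : ∀ p, ⟪n p, l p⟫_ℝ = 0)
    (hnu : ∀ p, ⟪n p, pu l p⟫_ℝ = 0)
    (hnv : ∀ p, ⟪n p, pv l p⟫_ℝ = 0)
    (huu : ∀ p : ℝ × ℝ, pu (pu l) p =
      (deriv E p.1 / (2 * E p.1)) • pu l p - E p.1 • l p)
    (huv : ∀ p : ℝ × ℝ, pv (pu l) p =
      (deriv E p.1 / (2 * E p.1)) • pv l p + n p)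
    (hvv : ∀ p : ℝ × ℝ, pv (pv l) p =
      -((deriv E p.1 / (2 * E p.1)) • pu l p) - E p.1 • l p)
    (hnu' : ∀ p : ℝ × ℝ, pu n p = -((1 / E p.1) • pv l p))
    (hnv' : ∀ p : ℝ × ℝ, pv n p = -((1 / E p.1) • pu l p)) :
    ∀ v₀ : ℝ, ∃ W : Submodule ℝ E4, Module.finrank ℝ W = 2 ∧
      ∀ u : ℝ, l (u, v₀) ∈ W ∧ ‖l (u, v₀)‖ = 1 :=
  stmt_9_general E l hE hEpos hl hunit hEu huu
end
end

section
/- Let E : ℝ → ℝ be smooth and positive and let l, n : ℝ² → ℝ⁴ be smooth maps with ⟨l,l⟩ = 1, ⟨l_u,l_u⟩ = ⟨l_v,l_v⟩ = E(u), ⟨l_u,l_v⟩ = 0, ⟨n,n⟩ = 1, ⟨n,l⟩ = ⟨n,l_u⟩ = ⟨n,l_v⟩ = 0, satisfying the derivative formulas of a generalized torus of second type: l_{uu} = (E'/2E)·l_u − E·l + n, l_{uv} = (E'/2E)·l_v, l_{vv} = −(E'/2E)·l_u − E·l − n, n_u = −(1/E)·l_u, n_v = (1/E)·l_v. Then for every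 u₀ ∈ ℝ the curve v ↦ l(u₀, v) is a circle in ℝ⁴ of radius 1/κ(u₀), where κ(u₀) = √(1 + E'(u₀)²/(4E(u₀)³) + 1/E(u₀)²); in particular κ(u₀) > 1, so these circles are not great circles, and distinct values of κ correspond to circles of distinct radii. -/
open Real
open scoped InnerProductSpace

noncomputable section

/-- A curve in `ℝ⁴` is a circle of radius `r` if its image lies in the intersection of a
2-dimensional affine subspace with the sphere `{x : ‖x − p‖ = r}` for some `p`. -/
def IsCircleOfRadius (c : ℝ → E4) (r : ℝ) : Prop :=
  ∃ (P : AffineSubspace ℝ E4) (p : E4),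
    Module.finrank ℝ P.direction = 2 ∧ ∀ t, c t ∈ P ∧ ‖c t - p‖ = r

/-- The curvature `κ(u) = √(1 + E'(u)²/(4E(u)³) + 1/E(u)²)` of the `v`-parameter lines. -/
def kappa (E : ℝ → ℝ) (u : ℝ) : ℝ :=
  Real.sqrt (1 + (deriv E u) ^ 2 / (4 * (E u) ^ 3) + 1 / (E u) ^ 2)

/-! Fix `u₀` and write `e = E(u₀)`, `h = E'(u₀)/(2e)`. Along the `v`-line the frame
`(l, l_u, l_v, n)` obeys linear equations with constant coefficients, and with
`c = e + h² + 1/e` the vector `w = (e l + h l_u + n)/c` satisfies `w' = l_v` and `l_v' = -c w`.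
Hence `l - w` is a fixed centre, `w` solves the harmonic oscillator `w'' = -c w` and so stays in
the plane spanned by `w(0)` and `l_v(0)`, and orthonormality of the frame gives
`‖w‖² = e/c = 1/κ(u₀)²`. -/

theorem eq_of_forall_hasDerivAt_zero {F : Type*} [NormedAddCommGroup F] [NormedSpace ℝ F]
    {f : ℝ → F} (hf : ∀ t, HasDerivAt f 0 t) (t s : ℝ) : f t = f s :=
  is_const_of_deriv_eq_zero (fun t => (hf t).differentiableAt) (fun t => (hf t).deriv) t s

section HarmonicOscillator

variable {F : Type*} [NormedAddCommGroup F] [InnerProductSpace ℝ F]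

theorem eq_zero_of_harmonic {ω : ℝ} (hω : ω ≠ 0) {x y : ℝ → F}
    (hx : ∀ t, HasDerivAt x (y t) t) (hy : ∀ t, HasDerivAt y (-(ω ^ 2) • x t) t)
    (hx0 : x 0 = 0) (hy0 : y 0 = 0) (t : ℝ) : x t = 0 := by
  have henergy : ∀ s, HasDerivAt (fun s => ⟪y s, y s⟫_ℝ + ω ^ 2 * ⟪x s, x s⟫_ℝ) 0 s := by
    intro s
    refine (((hy s).inner ℝ (hy s)).add
      (((hx s).inner ℝ (hx s)).const_mul (ω ^ 2))).congr_deriv ?_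
    simp only [real_inner_smul_left, real_inner_smul_right, real_inner_comm (x s) (y s)]
    ring
  have hzero := eq_of_forall_hasDerivAt_zero henergy t 0
  simp only [hx0, hy0, inner_zero_left, mul_zero, add_zero] at hzero
  have hxx : ω ^ 2 * ⟪x t, x t⟫_ℝ = 0 :=
    ((add_eq_zero_iff_of_nonneg real_inner_self_nonneg
      (mul_nonneg (sq_nonneg ω) real_inner_self_nonneg)).1 hzero).2
  exact inner_self_eq_zero.1 ((mul_eq_zero.1 hxx).resolve_left (pow_ne_zero 2 hω))

theorem eq_cos_smul_add_sin_smul_of_harmonic {ω : ℝ} (hω : ω ≠ 0) {x y : ℝ → F}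
    (hx : ∀ t, HasDerivAt x (y t) t) (hy : ∀ t, HasDerivAt y (-(ω ^ 2) • x t) t) (t : ℝ) :
    x t = cos (ω * t) • x 0 + (sin (ω * t) / ω) • y 0 := by
  have hcos : ∀ t, HasDerivAt (fun t => cos (ω * t)) (-sin (ω * t) * (ω * 1)) t := fun t =>
    (hasDerivAt_cos _).comp t ((hasDerivAt_id t).const_mul ω)
  have hsin : ∀ t, HasDerivAt (fun t => sin (ω * t)) (cos (ω * t) * (ω * 1)) t := fun t =>
    (hasDerivAt_sin _).comp t ((hasDerivAt_id t).const_mul ω)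
  refine sub_eq_zero.1 <| eq_zero_of_harmonic hω
    (fun t => (hx t).sub (((hcos t).smul_const _).add (((hsin t).div_const ω).smul_const _)))
    (fun t => ?_) (by simp) (by simp [hω]) t
  refine ((hy t).sub ((((hsin t).neg.mul_const (ω * 1)).smul_const (x 0)).add
    ((((hcos t).mul_const (ω * 1)).div_const ω).smul_const (y 0)))).congr_deriv ?_
  simp only [Pi.sub_apply, Pi.add_apply]
  match_scalars <;> field_simp

end HarmonicOscillator

theorem isCircleOfRadius_of_mem_span_pair {c : ℝ → E4} {p a b : E4} {r : ℝ}
    (ha : a ≠ 0) (hb : b ≠ 0) (hab : ⟪a, b⟫_ℝ = 0)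
    (hmem : ∀ t, c t - p ∈ Submodule.span ℝ {a, b}) (hr : ∀ t, ‖c t - p‖ = r) :
    IsCircleOfRadius c r := by
  have hli : LinearIndependent ℝ ![a, b] := by
    refine linearIndependent_of_ne_zero_of_inner_eq_zero (fun i => ?_) fun i j hij => ?_
    · fin_cases i <;> simpa
    · fin_cases i <;> fin_cases j <;> simp_all [real_inner_comm a b]
  refine ⟨AffineSubspace.mk' p (Submodule.span ℝ {a, b}), p, ?_, fun t => ⟨hmem t, hr t⟩⟩
  rw [AffineSubspace.direction_mk', ← Matrix.range_cons_cons_empty a b ![],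
    finrank_span_eq_card hli, Fintype.card_fin]

theorem isCircleOfRadius_of_frame {L Lu Lv N : ℝ → E4} {e h : ℝ} (he : 0 < e)
    (hL : ∀ t, HasDerivAt L (Lv t) t) (hLu : ∀ t, HasDerivAt Lu (h • Lv t) t)
    (hLv : ∀ t, HasDerivAt Lv (-(h • Lu t) - e • L t - N t) t)
    (hN : ∀ t, HasDerivAt N ((1 / e) • Lv t) t)
    (hLL : ∀ t, ⟪L t, L t⟫_ℝ = 1) (hLuLu : ∀ t, ⟪Lu t, Lu t⟫_ℝ = e)
    (hLvLv : ∀ t, ⟪Lv t, Lv t⟫_ℝ = e) (hNN : ∀ t, ⟪N t, N t⟫_ℝ = 1)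
    (hLLu : ∀ t, ⟪L t, Lu t⟫_ℝ = 0) (hLLv : ∀ t, ⟪L t, Lv t⟫_ℝ = 0)
    (hLuLv : ∀ t, ⟪Lu t, Lv t⟫_ℝ = 0) (hNL : ∀ t, ⟪N t, L t⟫_ℝ = 0)
    (hNLu : ∀ t, ⟪N t, Lu t⟫_ℝ = 0) (hNLv : ∀ t, ⟪N t, Lv t⟫_ℝ = 0) :
    IsCircleOfRadius L (1 / √(1 + h ^ 2 / e + 1 / e ^ 2)) := by
  set c := e + h ^ 2 + 1 / e with hc_def
  have hc : 0 < c := by positivity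
  set w : ℝ → E4 := fun t => c⁻¹ • (e • L t + h • Lu t + N t) with hw_def
  have hw : ∀ t, HasDerivAt w (Lv t) t := fun t => by
    refine ((((hL t).const_smul e).add ((hLu t).const_smul h)).add (hN t)).const_smul c⁻¹
      |>.congr_deriv ?_
    match_scalars
    rw [hc_def]
    field_simp
  have hw' : ∀ t, HasDerivAt Lv (-(√c ^ 2) • w t) t := fun t => by
    refine (hLv t).congr_deriv ?_
    rw [sq_sqrt hc.le, hw_def]
    match_scalars <;> field_simp
  have hcentre : ∀ t, L t - w t = L 0 - w 0 := fun t =>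
    eq_of_forall_hasDerivAt_zero (fun s => by simpa using (hL s).sub (hw s)) t 0
  have hww : ∀ t, ⟪w t, w t⟫_ℝ = e / c := fun t => by
    simp only [hw_def, inner_add_left, inner_add_right, real_inner_smul_left,
      real_inner_smul_right, real_inner_comm (L t) (Lu t), real_inner_comm (N t) (L t),
      real_inner_comm (N t) (Lu t), hLL, hLuLu, hNN, hLLu, hNL, hNLu]
    rw [hc_def]
    field_simp
    ring
  have hwLv : ⟪w 0, Lv 0⟫_ℝ = 0 := by
    simp only [hw_def, inner_add_left, real_inner_smul_left, hLLv, hLuLv, hNLv]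
    ring
  refine isCircleOfRadius_of_mem_span_pair (p := L 0 - w 0)
    (a := w 0) (b := Lv 0) ?_ ?_ hwLv (fun t => ?_) (fun t => ?_)
  · rw [← real_inner_self_pos, hww]
    positivity
  · rw [← real_inner_self_pos, hLvLv]
    exact he
  · rw [← hcentre t, sub_sub_cancel,
      eq_cos_smul_add_sin_smul_of_harmonic (sqrt_pos.2 hc).ne' hw hw' t]
    exact add_mem (Submodule.smul_mem _ _ (Submodule.subset_span (by simp)))
      (Submodule.smul_mem _ _ (Submodule.subset_span (by simp)))
  · rw [← hcentre t, sub_sub_cancel, norm_eq_sqrt_real_inner, hww, one_div, ← sqrt_inv]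
    congr 1
    rw [hc_def]
    field_simp

section PartialDerivatives

variable {F : Type*} [NormedAddCommGroup F] [NormedSpace ℝ F] {f : ℝ × ℝ → F}

theorem hasDerivAt_pv (hf : Differentiable ℝ f) (u t : ℝ) :
    HasDerivAt (fun s => f (u, s)) (pv f (u, t)) t :=
  (hf (u, t)).hasFDerivAt.comp_hasDerivAt t ((hasDerivAt_const t u).prodMk (hasDerivAt_id t))

theorem contDiff_pu {n : WithTop ℕ∞} (hf : ContDiff ℝ (n + 1) f) : ContDiff ℝ n (pu f) :=
  (hf.fderiv_right le_rfl).clm_apply contDiff_const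

theorem contDiff_pv {n : WithTop ℕ∞} (hf : ContDiff ℝ (n + 1) f) : ContDiff ℝ n (pv f) :=
  (hf.fderiv_right le_rfl).clm_apply contDiff_const

end PartialDerivatives

theorem inner_self_fderiv_eq_zero {G F : Type*} [NormedAddCommGroup G] [NormedSpace ℝ G]
    [NormedAddCommGroup F] [InnerProductSpace ℝ F] {f : G → F} (hf : Differentiable ℝ f)
    {c : ℝ} (hc : ∀ x, ⟪f x, f x⟫_ℝ = c) (x y : G) : ⟪f x, fderiv ℝ f x y⟫_ℝ = 0 := by
  have h := fderiv_inner_apply ℝ (hf x) (hf x) y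
  rw [show (fun x => ⟪f x, f x⟫_ℝ) = fun _ => c from funext hc, fderiv_const_apply,
    real_inner_comm (f x)] at h
  simpa using h.symm

theorem one_lt_kappa {E : ℝ → ℝ} {u : ℝ} (hE : 0 < E u) : 1 < kappa E u := by
  rw [kappa, lt_sqrt zero_le_one]
  have : 0 < 1 / E u ^ 2 := by positivity
  have : 0 ≤ deriv E u ^ 2 / (4 * E u ^ 3) := by positivity
  linarith

theorem kappa_eq {E : ℝ → ℝ} {u : ℝ} (hE : E u ≠ 0) :
    kappa E u = √(1 + (deriv E u / (2 * E u)) ^ 2 / E u + 1 / E u ^ 2) := by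
  rw [kappa]
  congr 1
  field_simp
  ring

theorem stmt_11_general (E : ℝ → ℝ) (l n : ℝ × ℝ → E4)
    (hEpos : ∀ u, 0 < E u)
    (hl : ContDiff ℝ (⊤ : ℕ∞) l) (hn : ContDiff ℝ (⊤ : ℕ∞) n)
    (hunit : ∀ p, ⟪l p, l p⟫_ℝ = 1)
    (hEu : ∀ p : ℝ × ℝ, ⟪pu l p, pu l p⟫_ℝ = E p.1)
    (hEv : ∀ p : ℝ × ℝ, ⟪pv l p, pv l p⟫_ℝ = E p.1)
    (hF : ∀ p, ⟪pu l p, pv l p⟫_ℝ = 0)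
    (hn1 : ∀ p, ⟪n p, n p⟫_ℝ = 1)
    (hnl : ∀ p, ⟪n p, l p⟫_ℝ = 0)
    (hnu : ∀ p, ⟪n p, pu l p⟫_ℝ = 0)
    (hnv : ∀ p, ⟪n p, pv l p⟫_ℝ = 0)
    (huv : ∀ p : ℝ × ℝ, pv (pu l) p =
      (deriv E p.1 / (2 * E p.1)) • pv l p)
    (hvv : ∀ p : ℝ × ℝ, pv (pv l) p =
      -((deriv E p.1 / (2 * E p.1)) • pu l p) - E p.1 • l p - n p)
    (hnv' : ∀ p : ℝ × ℝ, pv n p = (1 / E p.1) • pv l p) :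
    (∀ u₀ : ℝ, 1 < kappa E u₀ ∧
      IsCircleOfRadius (fun v => l (u₀, v)) (1 / kappa E u₀)) ∧
    ∀ u₀ u₁ : ℝ, kappa E u₀ ≠ kappa E u₁ → 1 / kappa E u₀ ≠ 1 / kappa E u₁ := by
  have hl2 : ContDiff ℝ 2 l := hl.of_le (WithTop.coe_le_coe.2 le_top)
  have hld : Differentiable ℝ l := hl2.differentiable two_ne_zero
  have hpul : Differentiable ℝ (pu l) := (contDiff_pu hl2).differentiable one_ne_zero
  have hpvl : Differentiable ℝ (pv l) := (contDiff_pv hl2).differentiable one_ne_zero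
  have hnd : Differentiable ℝ n := hn.differentiable (by simp)
  refine ⟨fun u₀ => ⟨one_lt_kappa (hEpos u₀), ?_⟩,
    fun u₀ u₁ hne => by rwa [Ne, one_div, one_div, inv_inj]⟩
  rw [kappa_eq (hEpos u₀).ne']
  exact isCircleOfRadius_of_frame (hEpos u₀) (hasDerivAt_pv hld u₀)
    (fun t => huv (u₀, t) ▸ hasDerivAt_pv hpul u₀ t)
    (fun t => hvv (u₀, t) ▸ hasDerivAt_pv hpvl u₀ t)
    (fun t => hnv' (u₀, t) ▸ hasDerivAt_pv hnd u₀ t)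
    (fun _ => hunit _) (fun _ => hEu _) (fun _ => hEv _) (fun _ => hn1 _)
    (fun _ => inner_self_fderiv_eq_zero hld hunit _ _)
    (fun _ => inner_self_fderiv_eq_zero hld hunit _ _)
    (fun _ => hF _) (fun _ => hnl _) (fun _ => hnu _) (fun _ => hnv _)

/-- for a generalized torus of second type (derivative formulas with
`E = E(u)`), each `v`-parameter line `v ↦ l(u₀,v)` is a circle of radius `1/κ(u₀)` with
`κ(u₀) = √(1 + E'(u₀)²/(4E(u₀)³) + 1/E(u₀)²) > 1` (so the circles are not great circles),
and distinct values of `κ` give circles of distinct radii. -/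
theorem stmt_11 (E : ℝ → ℝ) (l n : ℝ × ℝ → E4)
    (hE : ContDiff ℝ (⊤ : ℕ∞) E) (hEpos : ∀ u, 0 < E u)
    (hl : ContDiff ℝ (⊤ : ℕ∞) l) (hn : ContDiff ℝ (⊤ : ℕ∞) n)
    (hunit : ∀ p, ⟪l p, l p⟫_ℝ = 1)
    (hEu : ∀ p : ℝ × ℝ, ⟪pu l p, pu l p⟫_ℝ = E p.1)
    (hEv : ∀ p : ℝ × ℝ, ⟪pv l p, pv l p⟫_ℝ = E p.1)
    (hF : ∀ p, ⟪pu l p, pv l p⟫_ℝ = 0)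
    (hn1 : ∀ p, ⟪n p, n p⟫_ℝ = 1)
    (hnl : ∀ p, ⟪n p, l p⟫_ℝ = 0)
    (hnu : ∀ p, ⟪n p, pu l p⟫_ℝ = 0)
    (hnv : ∀ p, ⟪n p, pv l p⟫_ℝ = 0)
    (huu : ∀ p : ℝ × ℝ, pu (pu l) p =
      (deriv E p.1 / (2 * E p.1)) • pu l p - E p.1 • l p + n p)
    (huv : ∀ p : ℝ × ℝ, pv (pu l) p =
      (deriv E p.1 / (2 * E p.1)) • pv l p)
    (hvv : ∀ p : ℝ × ℝ, pv (pv l) p =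
      -((deriv E p.1 / (2 * E p.1)) • pu l p) - E p.1 • l p - n p)
    (hnu' : ∀ p : ℝ × ℝ, pu n p = -((1 / E p.1) • pu l p))
    (hnv' : ∀ p : ℝ × ℝ, pv n p = (1 / E p.1) • pv l p) :
    (∀ u₀ : ℝ, 1 < kappa E u₀ ∧
      IsCircleOfRadius (fun v => l (u₀, v)) (1 / kappa E u₀)) ∧
    ∀ u₀ u₁ : ℝ, kappa E u₀ ≠ kappa E u₁ → 1 / kappa E u₀ ≠ 1 / kappa E u₁ :=
  stmt_11_general E l n hEpos hl hn hunit hEu hEv hF hn1 hnl hnu hnv huv hvv hnv'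
end
end

section
/- For α > 0 define G_α(τ) = α²·cos²τ + sin²τ and h_α(x) = √α · ∫₀ˣ G_α(τ)^{−1/2} dτ. Then h_α : ℝ → ℝ is a smooth, strictly increasing bijection; let g_α denote its inverse function. The function z_α(u) = ln( G_α(g_α(u)) / α ) satisfies the ordinary differential equation z'' (u) + 4·sinh z(u) = 0 for all u ∈ ℝ, together with the initial conditions z_α(0) = ln α and z_α'(0) = 0. -/
open Real

noncomputable section

/-- `G_α(τ) = α²·cos²τ + sin²τ`. -/
def Gfun (α τ : ℝ) : ℝ := α ^ 2 * Real.cos τ ^ 2 + Real.sin τ ^ 2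

/-- `h_α(x) = √α · ∫₀ˣ G_α(τ)^{−1/2} dτ`. -/
def hfun (α : ℝ) (x : ℝ) : ℝ := Real.sqrt α * ∫ τ in (0:ℝ)..x, 1 / Real.sqrt (Gfun α τ)

/-- `g_α`, the inverse function of `h_α`. -/
def gfun (α : ℝ) : ℝ → ℝ := Function.invFun (hfun α)

/-- `z_α(u) = ln( G_α(g_α(u)) / α )`. -/
def zfun (α : ℝ) (u : ℝ) : ℝ := Real.log (Gfun α (gfun α u) / α)

/-!
Since `h_α' = √α / √G`, the inverse satisfies `g_α' = √(G ∘ g_α) / √α`, so derivatives in `u`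
are derivatives in `τ` multiplied by `√G / √α`. This gives `z' = (G' / √(α G)) ∘ g_α` and
`z'' = ((G G'' - G'² / 2) / (α G)) ∘ g_α`, while `4 sinh z = 2 (G / α - α / G)`. The equation
thus reduces to `G G'' - G'² / 2 + 2 G² = 2 α²`, an identity in `sin τ, cos τ`.
Bijectivity of `h_α` comes from `h_α' ≥ √α / √(α² + 1) > 0`.
-/

open Filter

theorem surjective_of_hasDerivAt_ge {f f' : ℝ → ℝ} (hf : ∀ x, HasDerivAt f (f' x) x) {c : ℝ}
    (hc : 0 < c) (hcf' : ∀ x, c ≤ f' x) : Function.Surjective f := by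
  have hmono : Monotone fun x => f x - c * x :=
    monotone_of_hasDerivAt_nonneg (fun x => (hf x).sub ((hasDerivAt_id x).const_mul c))
      fun x => by simpa using hcf' x
  have hcont : Continuous f := continuous_iff_continuousAt.2 fun x => (hf x).continuousAt
  refine hcont.surjective ?_ ?_
  · refine tendsto_atTop_mono' _ ?_ (tendsto_atTop_add_const_left _ (f 0)
      (tendsto_id.const_mul_atTop hc))
    filter_upwards [eventually_ge_atTop 0] with x hx
    have := hmono hx
    simp only [mul_zero, sub_zero, id] at this ⊢
    linarith
  · refine tendsto_atBot_mono' _ ?_ (tendsto_atBot_add_const_left _ (f 0)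
      (tendsto_id.const_mul_atBot hc))
    filter_upwards [eventually_le_atBot 0] with x hx
    have := hmono hx
    simp only [mul_zero, sub_zero, id] at this ⊢
    linarith

variable {α : ℝ}

lemma Gfun_pos (hα : 0 < α) (τ : ℝ) : 0 < Gfun α τ := by
  rcases eq_or_ne (cos τ) 0 with hcos | hcos
  · have : sin τ ^ 2 = 1 := by nlinarith [sin_sq_add_cos_sq τ]
    simp [Gfun, hcos, this]
  · unfold Gfun; positivity

lemma Gfun_le (α τ : ℝ) : Gfun α τ ≤ α ^ 2 + 1 := by
  unfold Gfun
  nlinarith [sin_sq_add_cos_sq τ, sq_nonneg α, sq_nonneg (sin τ), sq_nonneg (cos τ),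
    mul_nonneg (sq_nonneg α) (sq_nonneg (sin τ))]

lemma contDiff_Gfun (α : ℝ) : ContDiff ℝ (⊤ : ℕ∞) (Gfun α) := by
  unfold Gfun; fun_prop

lemma hasDerivAt_Gfun (α τ : ℝ) :
    HasDerivAt (Gfun α) (2 * (1 - α ^ 2) * sin τ * cos τ) τ := by
  refine ((((hasDerivAt_cos τ).fun_pow 2).const_mul (α ^ 2)).fun_add
    ((hasDerivAt_sin τ).fun_pow 2)).congr_deriv ?_
  push_cast
  ring

lemma hasDerivAt_deriv_Gfun (α τ : ℝ) :
    HasDerivAt (fun τ => 2 * (1 - α ^ 2) * sin τ * cos τ)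
      (2 * (1 - α ^ 2) * (cos τ ^ 2 - sin τ ^ 2)) τ := by
  refine (((hasDerivAt_sin τ).const_mul (2 * (1 - α ^ 2))).fun_mul
    (hasDerivAt_cos τ)).congr_deriv ?_
  ring

/-- With `S = √G` this is the Ermakov–Pinney equation `S'' + S = α² / S³` multiplied by `2 S³`. -/
lemma Gfun_ermakovPinney (α τ : ℝ) :
    Gfun α τ * (2 * (1 - α ^ 2) * (cos τ ^ 2 - sin τ ^ 2)) -
      (2 * (1 - α ^ 2) * sin τ * cos τ) ^ 2 / 2 + 2 * Gfun α τ ^ 2 = 2 * α ^ 2 := by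
  unfold Gfun
  linear_combination (2 * α ^ 2 * (sin τ ^ 2 + cos τ ^ 2 + 1)) * sin_sq_add_cos_sq τ

lemma contDiff_hfun_integrand (hα : 0 < α) :
    ContDiff ℝ (⊤ : ℕ∞) fun τ => 1 / √(Gfun α τ) :=
  contDiff_const.div ((contDiff_Gfun α).sqrt fun τ => (Gfun_pos hα τ).ne')
    fun τ => (sqrt_pos.2 (Gfun_pos hα τ)).ne'

lemma hasDerivAt_hfun (hα : 0 < α) (x : ℝ) :
    HasDerivAt (hfun α) (√α * (1 / √(Gfun α x))) x :=
  ((contDiff_hfun_integrand hα).continuous.integral_hasStrictDerivAt 0 x).hasDerivAt.const_mul _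

lemma contDiff_hfun (hα : 0 < α) : ContDiff ℝ (⊤ : ℕ∞) (hfun α) := by
  rw [contDiff_infty_iff_deriv]
  refine ⟨fun x => (hasDerivAt_hfun hα x).differentiableAt, ?_⟩
  rw [funext fun x => (hasDerivAt_hfun hα x).deriv]
  exact contDiff_const.mul (contDiff_hfun_integrand hα)

lemma strictMono_hfun (hα : 0 < α) : StrictMono (hfun α) :=
  strictMono_of_hasDerivAt_pos (hasDerivAt_hfun hα) fun x => by
    have := Gfun_pos hα x
    positivity

lemma surjective_hfun (hα : 0 < α) : Function.Surjective (hfun α) := by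
  refine surjective_of_hasDerivAt_ge (hasDerivAt_hfun hα)
    (c := √α * (1 / √(α ^ 2 + 1))) (by positivity) fun x => ?_
  gcongr
  · exact sqrt_pos.2 (Gfun_pos hα x)
  · exact Gfun_le α x

lemma hfun_gfun (hα : 0 < α) (u : ℝ) : hfun α (gfun α u) = u :=
  Function.rightInverse_invFun (surjective_hfun hα) u

lemma gfun_hfun (hα : 0 < α) (x : ℝ) : gfun α (hfun α x) = x :=
  Function.leftInverse_invFun (strictMono_hfun hα).injective x

lemma gfun_zero (hα : 0 < α) : gfun α 0 = 0 := by
  simpa [hfun] using gfun_hfun hα 0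

lemma continuous_gfun (hα : 0 < α) : Continuous (gfun α) := by
  refine Monotone.continuous_of_surjective (fun u v huv => ?_) fun x => ⟨hfun α x, gfun_hfun hα x⟩
  rwa [← (strictMono_hfun hα).le_iff_le, hfun_gfun hα, hfun_gfun hα]

lemma hasDerivAt_gfun (hα : 0 < α) (u : ℝ) :
    HasDerivAt (gfun α) (√(Gfun α (gfun α u)) / √α) u := by
  have hG := Gfun_pos hα (gfun α u)
  refine (HasDerivAt.of_local_left_inverse (continuous_gfun hα).continuousAt
    (hasDerivAt_hfun hα _) (by positivity) (.of_forall (hfun_gfun hα))).congr_deriv ?_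
  field_simp

lemma hasDerivAt_zfun (hα : 0 < α) (u : ℝ) :
    HasDerivAt (zfun α) (2 * (1 - α ^ 2) * sin (gfun α u) * cos (gfun α u) /
      (√α * √(Gfun α (gfun α u)))) u := by
  have hG := Gfun_pos hα (gfun α u)
  refine ((((hasDerivAt_Gfun α _).comp u (hasDerivAt_gfun hα u)).div_const α).log
    (by positivity)).congr_deriv ?_
  simp only [Function.comp_apply]
  field_simp
  rw [sq_sqrt hG.le]

lemma hasDerivAt_deriv_zfun (hα : 0 < α) (u : ℝ) :
    HasDerivAt (deriv (zfun α))
      ((Gfun α (gfun α u) * (2 * (1 - α ^ 2) * (cos (gfun α u) ^ 2 - sin (gfun α u) ^ 2)) -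
        (2 * (1 - α ^ 2) * sin (gfun α u) * cos (gfun α u)) ^ 2 / 2) /
        (α * Gfun α (gfun α u))) u := by
  have hG := Gfun_pos hα (gfun α u)
  rw [funext fun u => (hasDerivAt_zfun hα u).deriv]
  have hq := (hasDerivAt_deriv_Gfun α (gfun α u)).div
    (((hasDerivAt_Gfun α _).sqrt hG.ne').const_mul √α) (by positivity)
  refine (hq.comp u (hasDerivAt_gfun hα u)).congr_deriv ?_
  field_simp
  rw [sq_sqrt hG.le, sq_sqrt hα.le]
  ring

lemma sinh_zfun (hα : 0 < α) (u : ℝ) :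
    sinh (zfun α u) = (Gfun α (gfun α u) / α - α / Gfun α (gfun α u)) / 2 := by
  have hG := Gfun_pos hα (gfun α u)
  rw [zfun, sinh_eq, exp_neg, exp_log (by positivity), inv_div]

lemma zfun_ode (hα : 0 < α) (u : ℝ) :
    deriv (deriv (zfun α)) u + 4 * sinh (zfun α u) = 0 := by
  have hG := Gfun_pos hα (gfun α u)
  rw [(hasDerivAt_deriv_zfun hα u).deriv, sinh_zfun hα u]
  field_simp
  linear_combination 2 * Gfun_ermakovPinney α (gfun α u)

lemma zfun_zero (hα : 0 < α) : zfun α 0 = log α := by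
  rw [zfun, gfun_zero hα]
  congr 1
  simp only [Gfun, cos_zero, sin_zero]
  field_simp
  ring

lemma deriv_zfun_zero (hα : 0 < α) : deriv (zfun α) 0 = 0 := by
  simp [(hasDerivAt_zfun hα 0).deriv, gfun_zero hα]

/-- for `α > 0` the function `h_α` is a smooth strictly increasing bijection
of `ℝ`, and `z_α(u) = ln(G_α(g_α(u))/α)` solves `z'' + 4·sinh z = 0` with `z_α(0) = ln α`
and `z_α'(0) = 0`. -/
theorem stmt_12 (α : ℝ) (hα : 0 < α) :
    ContDiff ℝ (⊤ : ℕ∞) (hfun α) ∧ StrictMono (hfun α) ∧ Function.Bijective (hfun α) ∧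
    (∀ u : ℝ, deriv (deriv (zfun α)) u + 4 * Real.sinh (zfun α u) = 0) ∧
    zfun α 0 = Real.log α ∧ deriv (zfun α) 0 = 0 :=
  ⟨contDiff_hfun hα, strictMono_hfun hα, ⟨(strictMono_hfun hα).injective, surjective_hfun hα⟩,
    zfun_ode hα, zfun_zero hα, deriv_zfun_zero hα⟩
end
end

section
/- For all s, t ∈ ℝ, put Q = 1 + e^{2s} + t²·e^{s}. Then Q² ≥ 4·e^{2s}, and the number α = ( Q + √(Q² − 4e^{2s}) ) / (2·e^{s}) is positive and satisfies e^{s}·α² − Q·α + e^{s} = 0. Moreover, whenever α > 0 satisfies e^{s}·α² − Q·α + e^{s} = 0 and α ≠ 1, the identity ( 2αt·e^{s/2} / (1 − α²) )² + ( (1 + α² − 2α·e^{s}) / (1 − α²) )² = 1 holds, so there exists x₀ ∈ ℝ with sin 2x₀ = 2αt·e^{s/2}/(1 − α²) and cos 2x₀ = (1 + α² − 2α·e^{s})/(1 − α²). -/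
open Real

private lemma circle_point (x y : ℝ) (h : x ^ 2 + y ^ 2 = 1) :
    ∃ θ : ℝ, Real.sin θ = x ∧ Real.cos θ = y := by
  have hy1 : -1 ≤ y := by nlinarith [sq_nonneg x]
  have hy2 : y ≤ 1 := by nlinarith [sq_nonneg x]
  have hc : Real.cos (Real.arccos y) = y := Real.cos_arccos hy1 hy2
  have hs : Real.sin (Real.arccos y) = Real.sqrt (1 - y ^ 2) := Real.sin_arccos y
  have hx2 : 1 - y ^ 2 = x ^ 2 := by linarith
  have hsx : Real.sin (Real.arccos y) = |x| := by
    rw [hs, hx2, Real.sqrt_sq_eq_abs]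
  rcases le_or_gt 0 x with hx | hx
  · exact ⟨Real.arccos y, by rw [hsx, abs_of_nonneg hx], hc⟩
  · refine ⟨-Real.arccos y, ?_, by rw [Real.cos_neg, hc]⟩
    rw [Real.sin_neg, hsx, abs_of_neg hx, neg_neg]

/-- algebraic lemma: with `Q = 1 + e^{2s} + t²e^s` one has `Q² ≥ 4e^{2s}`,
the number `α = (Q + √(Q² − 4e^{2s}))/(2e^s)` is positive and solves
`e^s·α² − Q·α + e^s = 0`; and for any positive root `α ≠ 1` of this equation the pair
`(2αt·e^{s/2}/(1−α²), (1+α²−2αe^s)/(1−α²))` lies on the unit circle, hence is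
`(sin 2x₀, cos 2x₀)` for some `x₀`. -/
theorem stmt_16 (s t Q A : ℝ)
    (hQ : Q = 1 + Real.exp (2 * s) + t ^ 2 * Real.exp s)
    (hA : A = (Q + Real.sqrt (Q ^ 2 - 4 * Real.exp (2 * s))) / (2 * Real.exp s)) :
    Q ^ 2 ≥ 4 * Real.exp (2 * s) ∧
    0 < A ∧ Real.exp s * A ^ 2 - Q * A + Real.exp s = 0 ∧
    ∀ α : ℝ, 0 < α → Real.exp s * α ^ 2 - Q * α + Real.exp s = 0 → α ≠ 1 →
      (2 * α * t * Real.exp (s / 2) / (1 - α ^ 2)) ^ 2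
        + ((1 + α ^ 2 - 2 * α * Real.exp s) / (1 - α ^ 2)) ^ 2 = 1 ∧
      ∃ x₀ : ℝ,
        Real.sin (2 * x₀) = 2 * α * t * Real.exp (s / 2) / (1 - α ^ 2) ∧
        Real.cos (2 * x₀) = (1 + α ^ 2 - 2 * α * Real.exp s) / (1 - α ^ 2) := by
  have hE : 0 < Real.exp s := Real.exp_pos s
  have e2 : Real.exp (2 * s) = Real.exp s ^ 2 := by
    rw [two_mul, Real.exp_add]; ring
  have half : Real.exp (s / 2) ^ 2 = Real.exp s := by
    rw [sq, ← Real.exp_add]; norm_num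
  have hQge : Q ≥ 2 * Real.exp s := by
    rw [hQ, e2]; nlinarith [sq_nonneg (1 - Real.exp s), sq_nonneg t, hE]
  have hQpos : 0 < Q := lt_of_lt_of_le (by positivity) hQge
  have hdisc : Q ^ 2 ≥ 4 * Real.exp (2 * s) := by
    rw [e2]; nlinarith
  have hD : 0 ≤ Q ^ 2 - 4 * Real.exp (2 * s) := by linarith
  have hsqD : Real.sqrt (Q ^ 2 - 4 * Real.exp (2 * s)) ^ 2
      = Q ^ 2 - 4 * Real.exp (2 * s) := Real.sq_sqrt hD
  have hsqD0 : 0 ≤ Real.sqrt (Q ^ 2 - 4 * Real.exp (2 * s)) := Real.sqrt_nonneg _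
  have hApos : 0 < A := by
    rw [hA]; positivity
  have hAroot : Real.exp s * A ^ 2 - Q * A + Real.exp s = 0 := by
    have hEne : (2 * Real.exp s) ≠ 0 := by positivity
    rw [hA]
    field_simp
    nlinarith [hsqD, e2]
  refine ⟨hdisc, hApos, hAroot, ?_⟩
  intro α hα hroot hα1
  have hne : (1 - α ^ 2) ≠ 0 := by
    intro h
    have h' : (α - 1) * (α + 1) = 0 := by nlinarith
    rcases mul_eq_zero.1 h' with h1 | h1
    · exact hα1 (by linarith)
    · linarith
  have hroot' : Real.exp s * α ^ 2
      - (1 + Real.exp s ^ 2 + t ^ 2 * Real.exp s) * α + Real.exp s = 0 := by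
    rw [hQ, e2] at hroot; linarith
  have hnum : (2 * α * t * Real.exp (s / 2)) ^ 2
      + (1 + α ^ 2 - 2 * α * Real.exp s) ^ 2 = (1 - α ^ 2) ^ 2 := by
    linear_combination (4 * α ^ 2 * t ^ 2) * half - 4 * α * hroot'
  have hcirc : (2 * α * t * Real.exp (s / 2) / (1 - α ^ 2)) ^ 2
      + ((1 + α ^ 2 - 2 * α * Real.exp s) / (1 - α ^ 2)) ^ 2 = 1 := by
    field_simp
    linear_combination hnum
  refine ⟨hcirc, ?_⟩
  obtain ⟨θ, hsin, hcos⟩ := circle_point _ _ hcirc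
  refine ⟨θ / 2, ?_, ?_⟩
  · rw [show 2 * (θ / 2) = θ by ring]; exact hsin
  · rw [show 2 * (θ / 2) = θ by ring]; exact hcos
end

section
/- Define l : ℝ² → ℝ⁴ by l(u,v) = (1/cosh u)·(cos v, sin v, sinh u, 0), set E(u) = 1/cosh²u, r(u,v) = (v + π/2)·tanh u, and n = (0,0,0,1). Then: (i) ⟨l,l⟩ = 1, ⟨l_u,l_u⟩ = ⟨l_v,l_v⟩ = E, ⟨l_u,l_v⟩ = 0, and Δl + 2E·l = 0; (ii) Δr + 2E·r = 0; (iii) for all (u,v,w) ∈ ℝ³, r·l + (r_u/E)·l_u + (r_v/E)·l_v + w·n = ( −sinh u · sin v, sinh u · cos v, v + π/2, w ). Hence the minimal foliated semi-symmetric hypersurface generated by the totally geodesic sphere S² ⊂ S³ and this solution r is the first type helicoid X(u¹,t,w) = u¹(cos t·e₁ + sin t·e₂) + t·e₃ + w·e₄. -/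
/-!
Everything is an explicit computation. Every coordinate of `l`, and `r` itself, is a product
`g(u)·h(v)`, so its partial derivatives are products of one-variable derivatives of `sinh`,
`cosh`, `sin`, `cos`; with `cosh² u − sinh² u = 1` and `sin² v + cos² v = 1` each claimed identity
becomes a polynomial identity in these four quantities.
-/

open Real
open scoped InnerProductSpace

noncomputable section

/-- The totally geodesic sphere `S² = S³ ∩ ℝ³` in isothermal parameters:
`l(u,v) = (1/cosh u)·(cos v, sin v, sinh u, 0)`. -/
def lsph (q : ℝ × ℝ) : E4 :=
  (1 / Real.cosh q.1) • (WithLp.equiv 2 (Fin 4 → ℝ)).symm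
    ![Real.cos q.2, Real.sin q.2, Real.sinh q.1, 0]

/-- The conformal factor `E(u) = 1/cosh²u`. -/
def Esph (q : ℝ × ℝ) : ℝ := 1 / (Real.cosh q.1) ^ 2

/-- The scalar function `r(u,v) = (v + π/2)·tanh u`. -/
def rsph (q : ℝ × ℝ) : ℝ := (q.2 + Real.pi / 2) * Real.tanh q.1

/-- The unit normal `n = e₄`. -/
def nsph : E4 := EuclideanSpace.single (3 : Fin 4) (1 : ℝ)

def vec4 (a b c d : ℝ) : E4 := (WithLp.equiv 2 (Fin 4 → ℝ)).symm ![a, b, c, d]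

@[simp]
theorem vec4_add (a b c d a' b' c' d' : ℝ) :
    vec4 a b c d + vec4 a' b' c' d' = vec4 (a + a') (b + b') (c + c') (d + d') := by
  ext i; fin_cases i <;> rfl

@[simp]
theorem smul_vec4 (t a b c d : ℝ) : t • vec4 a b c d = vec4 (t * a) (t * b) (t * c) (t * d) := by
  ext i; fin_cases i <;> rfl

theorem vec4_zero : vec4 0 0 0 0 = 0 := by
  ext i; fin_cases i <;> rfl

theorem inner_vec4 (a b c d a' b' c' d' : ℝ) :
    ⟪vec4 a b c d, vec4 a' b' c' d'⟫_ℝ = a * a' + b * b' + c * c' + d * d' := by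
  simp [vec4, PiLp.inner_apply, Fin.sum_univ_four]
  ring

theorem nsph_eq_vec4 : nsph = vec4 0 0 0 1 := by
  ext i; fin_cases i <;> simp [nsph, vec4]

section Componentwise

variable {H : Type*} [NormedAddCommGroup H] [NormedSpace ℝ H]

theorem fderiv_euclidean_apply {ι : Type*} [Finite ι] {f : H → EuclideanSpace ℝ ι} {y : H}
    (hf : DifferentiableAt ℝ f y) (x : H) (i : ι) :
    fderiv ℝ f y x i = fderiv ℝ (fun z => f z i) y x := by
  have h := hasFDerivWithinAt_euclidean.1 (hf.hasFDerivAt.hasFDerivWithinAt (s := Set.univ)) i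
  rw [(hasFDerivWithinAt_univ.1 h).fderiv]
  rfl

variable {f₀ f₁ f₂ f₃ : H → ℝ} {y : H}

theorem differentiableAt_vec4
    (h₀ : DifferentiableAt ℝ f₀ y) (h₁ : DifferentiableAt ℝ f₁ y)
    (h₂ : DifferentiableAt ℝ f₂ y) (h₃ : DifferentiableAt ℝ f₃ y) :
    DifferentiableAt ℝ (fun z => vec4 (f₀ z) (f₁ z) (f₂ z) (f₃ z)) y := by
  refine differentiableAt_euclidean.2 fun i => ?_
  fin_cases i
  exacts [h₀, h₁, h₂, h₃]

theorem fderiv_vec4_apply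
    (h₀ : DifferentiableAt ℝ f₀ y) (h₁ : DifferentiableAt ℝ f₁ y)
    (h₂ : DifferentiableAt ℝ f₂ y) (h₃ : DifferentiableAt ℝ f₃ y) (x : H) :
    fderiv ℝ (fun z => vec4 (f₀ z) (f₁ z) (f₂ z) (f₃ z)) y x =
      vec4 (fderiv ℝ f₀ y x) (fderiv ℝ f₁ y x) (fderiv ℝ f₂ y x) (fderiv ℝ f₃ y x) := by
  ext i
  rw [fderiv_euclidean_apply (differentiableAt_vec4 h₀ h₁ h₂ h₃)]
  fin_cases i <;> rfl

end Componentwise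

section SeparablePartials

variable {g h : ℝ → ℝ} {g' h' : ℝ} {q : ℝ × ℝ}

theorem hasFDerivAt_fst_mul_snd (hg : HasDerivAt g g' q.1) (hh : HasDerivAt h h' q.2) :
    HasFDerivAt (fun p : ℝ × ℝ => g p.1 * h p.2)
      (g q.1 • h' • ContinuousLinearMap.snd ℝ ℝ ℝ +
        h q.2 • g' • ContinuousLinearMap.fst ℝ ℝ ℝ) q :=
  (hg.comp_hasFDerivAt q hasFDerivAt_fst).mul (hh.comp_hasFDerivAt q hasFDerivAt_snd)

theorem differentiableAt_fst_mul_snd (hg : HasDerivAt g g' q.1) (hh : HasDerivAt h h' q.2) :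
    DifferentiableAt ℝ (fun p : ℝ × ℝ => g p.1 * h p.2) q :=
  (hasFDerivAt_fst_mul_snd hg hh).differentiableAt

theorem pu_fst_mul_snd (hg : HasDerivAt g g' q.1) (hh : HasDerivAt h h' q.2) :
    pu (fun p : ℝ × ℝ => g p.1 * h p.2) q = g' * h q.2 := by
  simp [pu, (hasFDerivAt_fst_mul_snd hg hh).fderiv, mul_comm]

theorem pv_fst_mul_snd (hg : HasDerivAt g g' q.1) (hh : HasDerivAt h h' q.2) :
    pv (fun p : ℝ × ℝ => g p.1 * h p.2) q = g q.1 * h' := by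
  simp [pv, (hasFDerivAt_fst_mul_snd hg hh).fderiv]

theorem hasFDerivAt_comp_fst (hg : HasDerivAt g g' q.1) :
    HasFDerivAt (fun p : ℝ × ℝ => g p.1) (g' • ContinuousLinearMap.fst ℝ ℝ ℝ) q :=
  hg.comp_hasFDerivAt q hasFDerivAt_fst

theorem pu_comp_fst (hg : HasDerivAt g g' q.1) : pu (fun p : ℝ × ℝ => g p.1) q = g' := by
  simp [pu, (hasFDerivAt_comp_fst hg).fderiv]

theorem pv_comp_fst (hg : HasDerivAt g g' q.1) : pv (fun p : ℝ × ℝ => g p.1) q = 0 := by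
  simp [pv, (hasFDerivAt_comp_fst hg).fderiv]

end SeparablePartials

theorem pu_const {F : Type*} [NormedAddCommGroup F] [NormedSpace ℝ F] (c : F) (q : ℝ × ℝ) :
    pu (fun _ : ℝ × ℝ => c) q = 0 := by
  simp [pu]

theorem pv_const {F : Type*} [NormedAddCommGroup F] [NormedSpace ℝ F] (c : F) (q : ℝ × ℝ) :
    pv (fun _ : ℝ × ℝ => c) q = 0 := by
  simp [pv]

section Vec4Partials

variable {f₀ f₁ f₂ f₃ : ℝ × ℝ → ℝ} {q : ℝ × ℝ}

theorem pu_vec4 (h₀ : DifferentiableAt ℝ f₀ q) (h₁ : DifferentiableAt ℝ f₁ q)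
    (h₂ : DifferentiableAt ℝ f₂ q) (h₃ : DifferentiableAt ℝ f₃ q) :
    pu (fun p => vec4 (f₀ p) (f₁ p) (f₂ p) (f₃ p)) q =
      vec4 (pu f₀ q) (pu f₁ q) (pu f₂ q) (pu f₃ q) :=
  fderiv_vec4_apply h₀ h₁ h₂ h₃ (1, 0)

theorem pv_vec4 (h₀ : DifferentiableAt ℝ f₀ q) (h₁ : DifferentiableAt ℝ f₁ q)
    (h₂ : DifferentiableAt ℝ f₂ q) (h₃ : DifferentiableAt ℝ f₃ q) :
    pv (fun p => vec4 (f₀ p) (f₁ p) (f₂ p) (f₃ p)) q =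
      vec4 (pv f₀ q) (pv f₁ q) (pv f₂ q) (pv f₃ q) :=
  fderiv_vec4_apply h₀ h₁ h₂ h₃ (0, 1)

end Vec4Partials

namespace Real

theorem hasDerivAt_inv_cosh (u : ℝ) :
    HasDerivAt (fun u => (cosh u)⁻¹) (-sinh u / cosh u ^ 2) u := by
  simpa using (hasDerivAt_cosh u).fun_inv (cosh_pos u).ne'

theorem hasDerivAt_tanh (u : ℝ) : HasDerivAt tanh (cosh u ^ 2)⁻¹ u := by
  have h : HasDerivAt (fun u => sinh u / cosh u) _ u :=
    (hasDerivAt_sinh u).div (hasDerivAt_cosh u) (cosh_pos u).ne'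
  rw [show tanh = fun u => sinh u / cosh u from funext tanh_eq_sinh_div_cosh]
  refine h.congr_deriv ?_
  field_simp
  linear_combination cosh_sq_sub_sinh_sq u

theorem hasDerivAt_neg_sinh_div_cosh_sq (u : ℝ) :
    HasDerivAt (fun u => -sinh u / cosh u ^ 2) ((sinh u ^ 2 - 1) / cosh u ^ 3) u := by
  have h : HasDerivAt (fun u => -sinh u / cosh u ^ 2) _ u :=
    (hasDerivAt_sinh u).neg.div ((hasDerivAt_cosh u).pow 2) (pow_ne_zero 2 (cosh_pos u).ne')
  refine h.congr_deriv ?_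
  have := (cosh_pos u).ne'
  simp only [Pi.neg_apply]
  field_simp
  linear_combination -cosh u * cosh_sq u

theorem hasDerivAt_inv_cosh_sq (u : ℝ) :
    HasDerivAt (fun u => (cosh u ^ 2)⁻¹) (-2 * sinh u / cosh u ^ 3) u := by
  have h : HasDerivAt (fun u => (cosh u ^ 2)⁻¹) _ u :=
    ((hasDerivAt_cosh u).pow 2).inv (pow_ne_zero 2 (cosh_pos u).ne')
  refine h.congr_deriv ?_
  have := (cosh_pos u).ne'
  simp only [Pi.pow_apply]
  field_simp
  ring

end Real

theorem lsph_eq : lsph = fun p : ℝ × ℝ =>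
    vec4 ((cosh p.1)⁻¹ * cos p.2) ((cosh p.1)⁻¹ * sin p.2) (tanh p.1) 0 := by
  funext p
  ext i
  fin_cases i <;> simp [lsph, vec4, tanh_eq_sinh_div_cosh, div_eq_inv_mul]

theorem pu_lsph : pu lsph = fun p : ℝ × ℝ =>
    vec4 (-sinh p.1 / cosh p.1 ^ 2 * cos p.2) (-sinh p.1 / cosh p.1 ^ 2 * sin p.2)
      (cosh p.1 ^ 2)⁻¹ 0 := by
  funext p
  have hc := hasDerivAt_inv_cosh p.1
  rw [lsph_eq, pu_vec4 (differentiableAt_fst_mul_snd hc (hasDerivAt_cos p.2))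
    (differentiableAt_fst_mul_snd hc (hasDerivAt_sin p.2))
    (hasFDerivAt_comp_fst (hasDerivAt_tanh p.1)).differentiableAt (differentiableAt_const 0),
    pu_fst_mul_snd hc (hasDerivAt_cos p.2), pu_fst_mul_snd hc (hasDerivAt_sin p.2),
    pu_comp_fst (hasDerivAt_tanh p.1), pu_const]

theorem pv_lsph : pv lsph = fun p : ℝ × ℝ =>
    vec4 ((cosh p.1)⁻¹ * -sin p.2) ((cosh p.1)⁻¹ * cos p.2) 0 0 := by
  funext p
  have hc := hasDerivAt_inv_cosh p.1
  rw [lsph_eq, pv_vec4 (differentiableAt_fst_mul_snd hc (hasDerivAt_cos p.2))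
    (differentiableAt_fst_mul_snd hc (hasDerivAt_sin p.2))
    (hasFDerivAt_comp_fst (hasDerivAt_tanh p.1)).differentiableAt (differentiableAt_const 0),
    pv_fst_mul_snd hc (hasDerivAt_cos p.2), pv_fst_mul_snd hc (hasDerivAt_sin p.2),
    pv_comp_fst (hasDerivAt_tanh p.1), pv_const]

theorem pu_pu_lsph (q : ℝ × ℝ) : pu (pu lsph) q =
    vec4 ((sinh q.1 ^ 2 - 1) / cosh q.1 ^ 3 * cos q.2)
      ((sinh q.1 ^ 2 - 1) / cosh q.1 ^ 3 * sin q.2) (-2 * sinh q.1 / cosh q.1 ^ 3) 0 := by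
  have hc := hasDerivAt_neg_sinh_div_cosh_sq q.1
  rw [pu_lsph, pu_vec4 (differentiableAt_fst_mul_snd hc (hasDerivAt_cos q.2))
    (differentiableAt_fst_mul_snd hc (hasDerivAt_sin q.2))
    (hasFDerivAt_comp_fst (hasDerivAt_inv_cosh_sq q.1)).differentiableAt
    (differentiableAt_const 0),
    pu_fst_mul_snd hc (hasDerivAt_cos q.2), pu_fst_mul_snd hc (hasDerivAt_sin q.2),
    pu_comp_fst (hasDerivAt_inv_cosh_sq q.1), pu_const]

theorem pv_pv_lsph (q : ℝ × ℝ) : pv (pv lsph) q =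
    vec4 ((cosh q.1)⁻¹ * -cos q.2) ((cosh q.1)⁻¹ * -sin q.2) 0 0 := by
  have hc := hasDerivAt_inv_cosh q.1
  rw [pv_lsph, pv_vec4 (differentiableAt_fst_mul_snd hc (hasDerivAt_sin q.2).fun_neg)
    (differentiableAt_fst_mul_snd hc (hasDerivAt_cos q.2))
    (differentiableAt_const 0) (differentiableAt_const 0),
    pv_fst_mul_snd hc (hasDerivAt_sin q.2).fun_neg, pv_fst_mul_snd hc (hasDerivAt_cos q.2),
    pv_const]

theorem rsph_eq : rsph = fun p : ℝ × ℝ => tanh p.1 * (p.2 + π / 2) :=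
  funext fun _ => mul_comm _ _

theorem hasDerivAt_add_pi_div_two (v : ℝ) : HasDerivAt (fun v : ℝ => v + π / 2) 1 v :=
  (hasDerivAt_id v).add_const (π / 2)

theorem pu_rsph : pu rsph = fun p : ℝ × ℝ => (cosh p.1 ^ 2)⁻¹ * (p.2 + π / 2) := by
  funext p
  rw [rsph_eq, pu_fst_mul_snd (hasDerivAt_tanh p.1) (hasDerivAt_add_pi_div_two p.2)]

theorem pv_rsph : pv rsph = fun p : ℝ × ℝ => tanh p.1 := by
  funext p
  rw [rsph_eq, pv_fst_mul_snd (hasDerivAt_tanh p.1) (hasDerivAt_add_pi_div_two p.2), mul_one]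

theorem pu_pu_rsph (q : ℝ × ℝ) :
    pu (pu rsph) q = -2 * sinh q.1 / cosh q.1 ^ 3 * (q.2 + π / 2) := by
  rw [pu_rsph, pu_fst_mul_snd (hasDerivAt_inv_cosh_sq q.1) (hasDerivAt_add_pi_div_two q.2)]

theorem pv_pv_rsph (q : ℝ × ℝ) : pv (pv rsph) q = 0 := by
  rw [pv_rsph, pv_comp_fst (hasDerivAt_tanh q.1)]

theorem inner_lsph_self (q : ℝ × ℝ) : ⟪lsph q, lsph q⟫_ℝ = 1 := by
  have := (cosh_pos q.1).ne'
  rw [lsph_eq, inner_vec4, tanh_eq_sinh_div_cosh]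
  field_simp
  linear_combination sin_sq_add_cos_sq q.2 - cosh_sq q.1

theorem inner_pu_lsph_self (q : ℝ × ℝ) : ⟪pu lsph q, pu lsph q⟫_ℝ = Esph q := by
  have := (cosh_pos q.1).ne'
  rw [pu_lsph, inner_vec4, Esph]
  field_simp
  linear_combination sinh q.1 ^ 2 * sin_sq_add_cos_sq q.2 - cosh_sq q.1

theorem inner_pv_lsph_self (q : ℝ × ℝ) : ⟪pv lsph q, pv lsph q⟫_ℝ = Esph q := by
  have := (cosh_pos q.1).ne'
  rw [pv_lsph, inner_vec4, Esph]
  field_simp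
  linear_combination sin_sq_add_cos_sq q.2

theorem inner_pu_lsph_pv_lsph (q : ℝ × ℝ) : ⟪pu lsph q, pv lsph q⟫_ℝ = 0 := by
  rw [pu_lsph, pv_lsph, inner_vec4]
  ring

theorem laplacian_lsph (q : ℝ × ℝ) :
    pu (pu lsph) q + pv (pv lsph) q + (2 * Esph q) • lsph q = 0 := by
  have := (cosh_pos q.1).ne'
  rw [pu_pu_lsph, pv_pv_lsph, lsph_eq, ← vec4_zero]
  simp only [Esph, smul_vec4, vec4_add, tanh_eq_sinh_div_cosh]
  congr 1 <;> field_simp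
  · linear_combination -cos q.2 * cosh_sq q.1
  · linear_combination -sin q.2 * cosh_sq q.1
  · ring
  · ring

theorem laplacian_rsph (q : ℝ × ℝ) :
    pu (pu rsph) q + pv (pv rsph) q + 2 * Esph q * rsph q = 0 := by
  have := (cosh_pos q.1).ne'
  rw [pu_pu_rsph, pv_pv_rsph, Esph, rsph, tanh_eq_sinh_div_cosh]
  field_simp
  ring

theorem helicoid_eq (q : ℝ × ℝ) (w : ℝ) :
    rsph q • lsph q + (pu rsph q / Esph q) • pu lsph q
        + (pv rsph q / Esph q) • pv lsph q + w • nsph =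
      vec4 (-(sinh q.1 * sin q.2)) (sinh q.1 * cos q.2) (q.2 + π / 2) w := by
  have := (cosh_pos q.1).ne'
  rw [pu_rsph, pv_rsph, pu_lsph, pv_lsph, lsph_eq, nsph_eq_vec4]
  simp only [Esph, rsph, smul_vec4, vec4_add, tanh_eq_sinh_div_cosh]
  congr 1 <;> field_simp
  · ring
  · ring
  · linear_combination (-(q.2 * 2 + π)) * cosh_sq q.1
  · ring

/-- (i) `lsph` is an isothermal parametrization of a minimal surface in `S³`
with conformal factor `Esph`; (ii) `rsph` solves `Δr + 2E·r = 0`; (iii) the generated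
minimal foliated semi-symmetric hypersurface `r·l + (r_u/E)·l_u + (r_v/E)·l_v + w·n` is the
first type helicoid `(−sinh u·sin v, sinh u·cos v, v + π/2, w)`. -/
theorem stmt_18 :
    (∀ q : ℝ × ℝ,
      ⟪lsph q, lsph q⟫_ℝ = 1 ∧
      ⟪pu lsph q, pu lsph q⟫_ℝ = Esph q ∧
      ⟪pv lsph q, pv lsph q⟫_ℝ = Esph q ∧
      ⟪pu lsph q, pv lsph q⟫_ℝ = 0 ∧
      pu (pu lsph) q + pv (pv lsph) q + (2 * Esph q) • lsph q = 0) ∧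
    (∀ q : ℝ × ℝ, pu (pu rsph) q + pv (pv rsph) q + 2 * Esph q * rsph q = 0) ∧
    ∀ (q : ℝ × ℝ) (w : ℝ),
      rsph q • lsph q + (pu rsph q / Esph q) • pu lsph q
        + (pv rsph q / Esph q) • pv lsph q + w • nsph =
      (WithLp.equiv 2 (Fin 4 → ℝ)).symm
        ![-(Real.sinh q.1 * Real.sin q.2), Real.sinh q.1 * Real.cos q.2,
          q.2 + Real.pi / 2, w] :=
  ⟨fun q => ⟨inner_lsph_self q, inner_pu_lsph_self q, inner_pv_lsph_self q,
      inner_pu_lsph_pv_lsph q, laplacian_lsph q⟩,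
    laplacian_rsph, helicoid_eq⟩
end
end
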